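/- arXiv:2402.10443 — 6 statements merged into one kernel-verified Lean document; each statement's English description precedes it below -/
import Mathlib

section
/- Let X ⊆ ℕ² be a set of ordered pairs, let S ⊆ ℕ be a finite set with |S| = n, and let I ⊆ [n-1] be nonempty with m = max(I) and I⁻ = I \ {m}. Then d_X(I;S) = Σ_{A ⊆ S, |A| = m} d_X(I⁻;A) · d_X(∅;S\A) − d_X(I⁻;S). -/
open Classical in
/-- The `X`-descent set of a word `w = w₁⋯w_n` (stored 0-indexed as a list), as a subset of
`[n-1] = {1, …, n-1}`: position `i` is an `X`-descent iff `(w_i, w_{i+1}) ∈ X`. -/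
noncomputable def XDes (X : Set (ℕ × ℕ)) (w : List ℕ) : Finset ℕ :=
  (Finset.Icc 1 (w.length - 1)).filter (fun i => (w.getD (i - 1) 0, w.getD i 0) ∈ X)

/-- `dX X I S` is the number of permutations of the finite label set `S ⊆ ℕ` (written in
one-line notation as duplicate-free lists using exactly the labels of `S`) whose
`X`-descent set is exactly `I`. -/
noncomputable def dX (X : Set (ℕ × ℕ)) (I : Finset ℕ) (S : Finset ℕ) : ℕ :=
  Nat.card {w : List ℕ // w.Nodup ∧ w.toFinset = S ∧ XDes X w = I}

/-- `dXn X I n = dX X I [n]` where `[n] = {1, …, n}`. -/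
noncomputable def dXn (X : Set (ℕ × ℕ)) (I : Finset ℕ) (n : ℕ) : ℕ :=
  dX X I (Finset.Icc 1 n)

/-! Cutting a word after its `m`-th letter, `m = max I`, identifies the arrangements of `S` with
the triples `(A, u, v)` where `A ⊆ S` has `m` elements, `u` arranges `A` and `v` arranges `S \ A`.
The `X`-descents of `u` are those of the word below `m`, and `v` has none exactly when the word has
none above `m`. Hence the triples with `XDes u = I⁻` and `XDes v = ∅` correspond to the words with
descent set `I` or `I⁻`, according to whether `m` is a descent, and
`d_X(I;S) + d_X(I⁻;S) = Σ_A d_X(I⁻;A) · d_X(∅;S∖A)`. -/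

open Finset

section Arrangements

variable {α : Type*} [DecidableEq α]

noncomputable def arrangements (S : Finset α) : Finset (List α) :=
  S.toList.permutations.toFinset

theorem mem_arrangements {S : Finset α} {w : List α} :
    w ∈ arrangements S ↔ w.Nodup ∧ w.toFinset = S := by
  rw [arrangements, List.mem_toFinset, List.mem_permutations]
  constructor
  · intro hp
    exact ⟨hp.nodup_iff.mpr S.nodup_toList, by rw [List.toFinset_eq_of_perm _ _ hp, toList_toFinset]⟩
  · rintro ⟨hw, rfl⟩
    exact List.perm_of_nodup_nodup_toFinset_eq hw (nodup_toList _) (toList_toFinset _).symm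

theorem length_of_mem_arrangements {S : Finset α} {w : List α} (hw : w ∈ arrangements S) :
    w.length = #S := by
  obtain ⟨hnd, rfl⟩ := mem_arrangements.mp hw
  exact (List.toFinset_card_of_nodup hnd).symm

theorem append_mem_arrangements {A S : Finset α} {u v : List α} (hAS : A ⊆ S)
    (hu : u ∈ arrangements A) (hv : v ∈ arrangements (S \ A)) : u ++ v ∈ arrangements S := by
  obtain ⟨hu, huA⟩ := mem_arrangements.mp hu
  obtain ⟨hv, hvA⟩ := mem_arrangements.mp hv
  have huv : u.Disjoint v :=
    List.disjoint_toFinset_iff_disjoint.mp (by rw [huA, hvA]; exact disjoint_sdiff)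
  exact mem_arrangements.mpr
    ⟨hu.append hv huv, by rw [List.toFinset_append, huA, hvA, union_sdiff_of_subset hAS]⟩

theorem drop_mem_arrangements {S : Finset α} {w : List α} (hw : w ∈ arrangements S) (m : ℕ) :
    w.drop m ∈ arrangements (S \ (w.take m).toFinset) := by
  obtain ⟨hnd, rfl⟩ := mem_arrangements.mp hw
  rw [← List.take_append_drop m w, List.nodup_append'] at hnd
  have hw := congrArg List.toFinset (List.take_append_drop m w)
  rw [List.toFinset_append] at hw
  rw [mem_arrangements, ← hw,
    union_sdiff_cancel_left (List.disjoint_toFinset_iff_disjoint.mpr hnd.2.2)]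
  exact ⟨hnd.2.1, rfl⟩

theorem card_filter_arrangements_take_drop (S : Finset α) {m : ℕ} (hm : m ≤ #S)
    (P Q : List α → Prop) [DecidablePred P] [DecidablePred Q] :
    #{w ∈ arrangements S | P (w.take m) ∧ Q (w.drop m)} =
      ∑ A ∈ S.powersetCard m, #{u ∈ arrangements A | P u} * #{v ∈ arrangements (S \ A) | Q v} := by
  simp_rw [← card_product]
  rw [← card_sigma]
  refine card_nbij' (fun w => ⟨(w.take m).toFinset, w.take m, w.drop m⟩)
    (fun p => p.2.1 ++ p.2.2) ?_ ?_ ?_ ?_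
  · intro w hw
    simp only [mem_coe, mem_filter] at hw
    obtain ⟨hwS, hP, hQ⟩ := hw
    obtain ⟨hnd, rfl⟩ := mem_arrangements.mp hwS
    have hnd' : (w.take m).Nodup := (List.take_sublist m w).nodup hnd
    simp only [mem_coe, mem_sigma, mem_powersetCard, mem_product, mem_filter]
    refine ⟨⟨fun _ ha =>
      List.mem_toFinset.mpr ((List.take_sublist m w).subset (List.mem_toFinset.mp ha)), ?_⟩,
      ⟨mem_arrangements.mpr ⟨hnd', rfl⟩, hP⟩, drop_mem_arrangements hwS m, hQ⟩
    have hw_len := length_of_mem_arrangements hwS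
    rw [List.toFinset_card_of_nodup hnd', List.length_take]
    omega
  · rintro ⟨A, u, v⟩ hp
    simp only [mem_coe, mem_sigma, mem_powersetCard, mem_product, mem_filter] at hp ⊢
    obtain ⟨⟨hAS, hA⟩, ⟨hu, hP⟩, hv, hQ⟩ := hp
    have hu_len : u.length = m := (length_of_mem_arrangements hu).trans hA
    rw [List.take_left' hu_len, List.drop_left' hu_len]
    exact ⟨append_mem_arrangements hAS hu hv, hP, hQ⟩
  · intro w _
    simp
  · rintro ⟨A, u, v⟩ hp
    simp only [mem_coe, mem_sigma, mem_powersetCard, mem_product, mem_filter] at hp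
    obtain ⟨⟨-, hA⟩, ⟨hu, -⟩, -⟩ := hp
    have hu_len : u.length = m := (length_of_mem_arrangements hu).trans hA
    simp only [List.take_left' hu_len, List.drop_left' hu_len, (mem_arrangements.mp hu).2]

end Arrangements

theorem List.getD_take_of_lt {α : Type*} {w : List α} {m j : ℕ} (d : α) (h : j < m) :
    (w.take m).getD j d = w.getD j d := by
  simp [List.getD_eq_getElem?_getD, h]

theorem List.getD_drop {α : Type*} (w : List α) (m j : ℕ) (d : α) :
    (w.drop m).getD j d = w.getD (m + j) d := by
  simp [List.getD_eq_getElem?_getD, List.getElem?_drop]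

section Descents

variable {X : Set (ℕ × ℕ)} {w : List ℕ} {m i : ℕ}

theorem mem_XDes :
    i ∈ XDes X w ↔ (1 ≤ i ∧ i ≤ w.length - 1) ∧ (w.getD (i - 1) 0, w.getD i 0) ∈ X := by
  classical
  rw [XDes, mem_filter, mem_Icc]

theorem XDes_take : XDes X (w.take m) = {i ∈ XDes X w | i < m} := by
  ext i
  simp only [mem_filter, mem_XDes, List.length_take]
  constructor
  · rintro ⟨⟨h1, h2⟩, hx⟩
    rw [List.getD_take_of_lt _ (by omega), List.getD_take_of_lt _ (by omega)] at hx
    exact ⟨⟨⟨h1, by omega⟩, hx⟩, by omega⟩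
  · rintro ⟨⟨⟨h1, h2⟩, hx⟩, hlt⟩
    rw [List.getD_take_of_lt _ (by omega), List.getD_take_of_lt _ hlt]
    exact ⟨⟨h1, by omega⟩, hx⟩

theorem mem_XDes_drop : i ∈ XDes X (w.drop m) ↔ 1 ≤ i ∧ m + i ∈ XDes X w := by
  rw [mem_XDes, mem_XDes, List.length_drop, List.getD_drop, List.getD_drop]
  constructor
  · rintro ⟨⟨h1, h2⟩, hx⟩
    rw [show m + (i - 1) = m + i - 1 by omega] at hx
    exact ⟨h1, ⟨by omega, by omega⟩, hx⟩
  · rintro ⟨h1, ⟨-, h3⟩, hx⟩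
    rw [show m + (i - 1) = m + i - 1 by omega]
    exact ⟨⟨h1, by omega⟩, hx⟩

theorem XDes_drop_eq_empty_iff : XDes X (w.drop m) = ∅ ↔ ∀ i ∈ XDes X w, i ≤ m := by
  simp only [eq_empty_iff_forall_notMem, mem_XDes_drop, not_and]
  constructor
  · intro h i hi
    by_contra! hmi
    exact h (i - m) (by omega) (by rwa [Nat.add_sub_cancel' hmi.le])
  · intro h i hi hmi
    have := h _ hmi
    omega

end Descents

theorem Finset.filter_lt_eq_erase {β : Type*} [LinearOrder β] {D : Finset β} {m : β}
    (hD : ∀ i ∈ D, i ≤ m) : {i ∈ D | i < m} = D.erase m := by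
  ext i
  simp only [mem_filter, mem_erase]
  exact ⟨fun ⟨hi, hlt⟩ => ⟨hlt.ne, hi⟩, fun ⟨hne, hi⟩ => ⟨hi, (hD i hi).lt_of_ne hne⟩⟩

theorem Finset.filter_lt_eq_erase_and_le_iff {β : Type*} [LinearOrder β] {D I : Finset β} {m : β}
    (hm : m ∈ I) (hI : ∀ i ∈ I, i ≤ m) :
    ({i ∈ D | i < m} = I.erase m ∧ ∀ i ∈ D, i ≤ m) ↔ D = I ∨ D = I.erase m := by
  constructor
  · rintro ⟨hlt, hle⟩
    rw [filter_lt_eq_erase hle] at hlt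
    by_cases hmD : m ∈ D
    · left
      rw [← insert_erase hmD, hlt, insert_erase hm]
    · right
      rwa [erase_eq_of_notMem hmD] at hlt
  · rintro (rfl | rfl)
    · exact ⟨filter_lt_eq_erase hI, hI⟩
    · have hle : ∀ i ∈ I.erase m, i ≤ m := fun i hi => hI i (mem_of_mem_erase hi)
      rw [filter_lt_eq_erase hle, erase_idem]
      exact ⟨rfl, hle⟩

theorem dX_eq_card_filter (X : Set (ℕ × ℕ)) (I S : Finset ℕ) :
    dX X I S = #{w ∈ arrangements S | XDes X w = I} := by
  rw [dX, ← Nat.card_eq_finsetCard]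
  exact Nat.card_congr (Equiv.subtypeEquivRight fun w => by
    rw [mem_filter, mem_arrangements, and_assoc])

theorem dX_add_dX_erase_max' (X : Set (ℕ × ℕ)) (S I : Finset ℕ) (hne : I.Nonempty)
    (hmS : I.max' hne ≤ #S) :
    dX X I S + dX X (I.erase (I.max' hne)) S =
      ∑ A ∈ S.powersetCard (I.max' hne),
        dX X (I.erase (I.max' hne)) A * dX X ∅ (S \ A) := by
  set m := I.max' hne
  have hmI : m ∈ I := I.max'_mem hne
  have hdisj : Disjoint {w ∈ arrangements S | XDes X w = I}
      {w ∈ arrangements S | XDes X w = I.erase m} :=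
    disjoint_filter.mpr fun w _ hI hI' => erase_eq_self.mp (hI' ▸ hI) hmI
  simp only [dX_eq_card_filter]
  rw [← card_filter_arrangements_take_drop S hmS, ← card_union_of_disjoint hdisj, ← filter_or]
  refine congrArg card (filter_congr fun w _ => ?_)
  rw [XDes_take, XDes_drop_eq_empty_iff, filter_lt_eq_erase_and_le_iff hmI (I.le_max' · )]

/-- base recurrence. For `X ⊆ ℕ²`, a finite `S ⊆ ℕ` with `|S| = n`,
and nonempty `I ⊆ [n-1]` with `m = max I` and `I⁻ = I \ {m}`:
`d_X(I;S) = Σ_{A ⊆ S, |A| = m} d_X(I⁻;A)·d_X(∅;S∖A) − d_X(I⁻;S)`. -/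
theorem stmt0 (X : Set (ℕ × ℕ)) (n : ℕ) (S : Finset ℕ) (hS : S.card = n)
    (I : Finset ℕ) (hI : I ⊆ Finset.Icc 1 (n - 1)) (hne : I.Nonempty) :
    (dX X I S : ℤ) =
      (∑ A ∈ S.powersetCard (I.max' hne),
        (dX X (I.erase (I.max' hne)) A : ℤ) * (dX X ∅ (S \ A) : ℤ))
      - (dX X (I.erase (I.max' hne)) S : ℤ) := by
  have hmS : I.max' hne ≤ #S := by
    have := mem_Icc.mp (hI (I.max'_mem hne))
    omega
  rw [eq_sub_iff_add_eq]
  exact_mod_cast dX_add_dX_erase_max' X S I hne hmS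
end

section
/- Let m ≥ 1 and suppose X ⊆ ℕ² is periodic modulo m, i.e. there exists f : (ℤ/mℤ)² → {0,1} such that for all distinct a, b ∈ ℕ, (a,b) ∈ X iff f(a mod m, b mod m) = 1. Fix n ≥ 1 and I ⊆ [n-1]. For r ∈ ℤ/mℤ let ℓ_r(n) = |{t ∈ [n] : t ≡ r mod m}|, and let 𝒲_{f,I}(n) be the set of words w = w₁⋯w_n over ℤ/mℤ with |{i : w_i = r}| = ℓ_r(n) for all r and such that f(w_i, w_{i+1}) = 1 iff i ∈ I for all i ∈ [n-1]. Then d_X(I;n) = |𝒲_{f,I}(n)| · Π_{r ∈ ℤ/mℤ} ℓ_r(n)!. -/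
/-- `residueCount m n r = ℓ_r(n)`, the number of `t ∈ [n]` with `t ≡ r (mod m)`. -/
def residueCount (m n : ℕ) (r : ZMod m) : ℕ :=
  ((Finset.Icc 1 n).filter (fun t : ℕ => ((t : ZMod m) = r))).card


set_option linter.unusedSectionVars false

variable {m : ℕ} [NeZero m]

private lemma len_aux (l : List ℕ) (w : List (ZMod m))
    (hmap : l.map (Nat.cast : ℕ → ZMod m) = w) : l.length = w.length := by
  rw [← hmap, List.length_map]

private lemma getElem_cast (l : List ℕ) (w : List (ZMod m))
    (hmap : l.map (Nat.cast : ℕ → ZMod m) = w) (i : ℕ) (hiw : i < w.length)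
    (hil : i < l.length) : w[i] = ((l[i] : ℕ) : ZMod m) := by
  subst hmap; simp

/-- forward fiber map -/
private noncomputable def toLab (S : Finset ℕ) (w : List (ZMod m))
    (l : List ℕ) (hS : l.toFinset = S)
    (hmap : l.map (Nat.cast : ℕ → ZMod m) = w) (r : ZMod m) :
    {i : Fin w.length // w.get i = r} → {x : ℕ // x ∈ S ∧ (x : ZMod m) = r} :=
  fun p => ⟨l[p.1.1]'(by rw [len_aux l w hmap]; exact p.1.2), by
    constructor
    · rw [← hS]; exact List.mem_toFinset.2 (List.getElem_mem _)
    · have h := p.2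
      rw [List.get_eq_getElem, getElem_cast l w hmap] at h
      exact h⟩

private lemma toLab_bij (S : Finset ℕ) (w : List (ZMod m))
    (l : List ℕ) (hnd : l.Nodup) (hS : l.toFinset = S)
    (hmap : l.map (Nat.cast : ℕ → ZMod m) = w) (r : ZMod m) :
    Function.Bijective (toLab S w l hS hmap r) := by
  constructor
  · rintro ⟨⟨i, hi⟩, hri⟩ ⟨⟨j, hj⟩, hrj⟩ h
    have h' : l[i]'(by rw [len_aux l w hmap]; exact hi) = l[j]'(by rw [len_aux l w hmap]; exact hj) :=
      congrArg Subtype.val h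
    have := (hnd.getElem_inj_iff).1 h'
    simp only [Subtype.mk.injEq, Fin.mk.injEq]
    exact this
  · rintro ⟨x, hxS, hxr⟩
    rw [← hS] at hxS
    obtain ⟨i, hi, hx⟩ := List.getElem_of_mem (List.mem_toFinset.1 hxS)
    have hi' : i < w.length := by rw [← len_aux l w hmap]; exact hi
    refine ⟨⟨⟨i, hi'⟩, ?_⟩, ?_⟩
    · rw [List.get_eq_getElem, getElem_cast l w hmap _ hi' hi, hx, hxr]
    · exact Subtype.ext hx

private lemma st_aux (S : Finset ℕ) (w : List (ZMod m))
    (F : ∀ r : ZMod m, {i : Fin w.length // w.get i = r} ≃ {x : ℕ // x ∈ S ∧ (x : ZMod m) = r})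
    (i : Fin w.length) (r : ZMod m) (hi : w.get i = r) :
    ((F (w.get i)) ⟨i, rfl⟩).1 = ((F r) ⟨i, hi⟩).1 := by subst hi; rfl

private noncomputable def gfun (S : Finset ℕ) (w : List (ZMod m))
    (F : ∀ r : ZMod m, {i : Fin w.length // w.get i = r} ≃ {x : ℕ // x ∈ S ∧ (x : ZMod m) = r}) :
    Fin w.length → ℕ := fun i => ((F (w.get i)) ⟨i, rfl⟩).1

private lemma gfun_cast (S : Finset ℕ) (w : List (ZMod m)) (F) (i : Fin w.length) :
    ((gfun S w F i : ℕ) : ZMod m) = w.get i := ((F (w.get i)) ⟨i, rfl⟩).2.2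

private lemma gfun_inj (S : Finset ℕ) (w : List (ZMod m)) (F) :
    Function.Injective (gfun S w F) := by
  intro i j h
  have hw : w.get j = w.get i := by
    rw [← gfun_cast S w F i, ← gfun_cast S w F j, h]
  have h2 : (F (w.get i)) ⟨i, rfl⟩ = (F (w.get i)) ⟨j, hw⟩ := by
    apply Subtype.ext
    rw [← st_aux S w F j (w.get i) hw]
    exact h
  have := (F (w.get i)).injective h2
  exact congrArg Subtype.val this

private lemma mem_gfun_iff (S : Finset ℕ) (w : List (ZMod m)) (F) (x : ℕ) :
    x ∈ S ↔ ∃ i, gfun S w F i = x := by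
  constructor
  · intro hx
    set p := (F (x : ZMod m)).symm ⟨x, hx, rfl⟩ with hp
    have happ : (F (x : ZMod m)) p = ⟨x, hx, rfl⟩ := (F (x : ZMod m)).apply_symm_apply _
    refine ⟨p.1, ?_⟩
    unfold gfun
    rw [st_aux S w F p.1 (x : ZMod m) p.2]
    exact congrArg Subtype.val happ
  · rintro ⟨i, rfl⟩
    exact ((F (w.get i)) ⟨i, rfl⟩).2.1

private noncomputable def bigFiberEquiv (S : Finset ℕ) (w : List (ZMod m)) :
    {l : List ℕ // l.Nodup ∧ l.toFinset = S ∧ l.map (Nat.cast : ℕ → ZMod m) = w} ≃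
      ∀ r : ZMod m, {i : Fin w.length // w.get i = r} ≃ {x : ℕ // x ∈ S ∧ (x : ZMod m) = r} where
  toFun lp r := Equiv.ofBijective _ (toLab_bij S w lp.1 lp.2.1 lp.2.2.1 lp.2.2.2 r)
  invFun F := ⟨List.ofFn (gfun S w F), by
      constructor
      · exact List.nodup_ofFn.2 (gfun_inj S w F)
      constructor
      · ext x
        simp only [List.mem_toFinset, List.mem_ofFn, Set.mem_range]
        exact (mem_gfun_iff S w F x).symm
      · have h1 : (List.ofFn (gfun S w F)).map (Nat.cast : ℕ → ZMod m)
            = List.ofFn (fun i => ((gfun S w F i : ℕ) : ZMod m)) := by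
          rw [List.map_ofFn]; rfl
        rw [h1]
        have h2 : (fun i => ((gfun S w F i : ℕ) : ZMod m)) = w.get := by
          funext i; exact gfun_cast S w F i
        rw [h2, List.ofFn_get]⟩
  left_inv := by
    rintro ⟨l, hnd, hS, hmap⟩
    apply Subtype.ext
    apply List.ext_getElem
    · simp [← len_aux l w hmap]
    · intro k h1 h2
      simp only [List.getElem_ofFn]
      rfl
  right_inv := by
    intro F
    funext r
    apply Equiv.ext
    rintro ⟨i, hi⟩
    apply Subtype.ext
    show (List.ofFn (gfun S w F))[i.1]'(by simpa using i.2) = ((F r) ⟨i, hi⟩).1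
    rw [List.getElem_ofFn]
    simp only [Fin.eta]
    exact st_aux S w F i r hi

private lemma count_eq_card_fiber {α : Type*} [DecidableEq α] (l : List α) (a : α) :
    l.count a = Fintype.card {i : Fin l.length // l.get i = a} := by
  classical
  rw [Fintype.card_subtype]
  conv_lhs => rw [← List.map_get_finRange l]
  rw [← Multiset.coe_count, ← Multiset.map_coe, Multiset.count_map, Finset.card_filter]
  rw [Fin.univ_def]
  simp [Finset.filter, eq_comm]

private lemma fib_card (S : Finset ℕ) (w : List (ZMod m))
    (hcount : ∀ r : ZMod m, w.count r = (S.filter (fun t : ℕ => ((t : ZMod m) = r))).card) :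
    Nat.card {l : List ℕ // l.Nodup ∧ l.toFinset = S ∧ l.map (Nat.cast : ℕ → ZMod m) = w}
      = ∏ r : ZMod m, Nat.factorial ((S.filter (fun t : ℕ => ((t : ZMod m) = r))).card) := by
  classical
  rw [Nat.card_congr (bigFiberEquiv S w), Nat.card_pi]
  apply Finset.prod_congr rfl
  intro r _
  have e2 : {x : ℕ // x ∈ S ∧ (x : ZMod m) = r} ≃
      {x : ℕ // x ∈ S.filter (fun t : ℕ => ((t : ZMod m) = r))} :=
    Equiv.subtypeEquivRight (by intro x; simp [Finset.mem_filter])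
  haveI : Fintype {x : ℕ // x ∈ S ∧ (x : ZMod m) = r} := Fintype.ofEquiv _ e2.symm
  have c1 : Fintype.card {i : Fin w.length // w.get i = r} = w.count r :=
    (count_eq_card_fiber w r).symm
  have c2 : Fintype.card {x : ℕ // x ∈ S ∧ (x : ZMod m) = r}
      = (S.filter (fun t : ℕ => ((t : ZMod m) = r))).card := by
    rw [Fintype.card_congr e2, Fintype.card_coe]
  have hcards : Fintype.card {i : Fin w.length // w.get i = r}
      = Fintype.card {x : ℕ // x ∈ S ∧ (x : ZMod m) = r} := by
    rw [c1, c2, hcount r]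
  obtain ⟨e⟩ := Fintype.card_eq.1 hcards
  rw [Nat.card_eq_fintype_card, Fintype.card_equiv e, c1, hcount r]

section main
variable (X : Set (ℕ × ℕ)) (f : ZMod m → ZMod m → Bool) (n : ℕ) (I : Finset ℕ)

private lemma len_of (l : List ℕ) (hnd : l.Nodup) (hS : l.toFinset = Finset.Icc 1 n) :
    l.length = n := by
  rw [← List.toFinset_card_of_nodup hnd, hS, Nat.card_Icc]; omega

private lemma getD_ne (l : List ℕ) (hnd : l.Nodup) (hlen : l.length = n) (i : ℕ)
    (hi : i ∈ Finset.Icc 1 (n - 1)) (hn : 1 ≤ n) : l.getD (i - 1) 0 ≠ l.getD i 0 := by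
  rw [Finset.mem_Icc] at hi
  have hi' : i < l.length := by omega
  have hi1 : i - 1 < l.length := by omega
  rw [List.getD_eq_getElem _ _ hi1, List.getD_eq_getElem _ _ hi']
  intro h
  have := hnd.getElem_inj_iff.1 h
  omega

private lemma xdes_iff (hX : ∀ a b : ℕ, a ≠ b → ((a, b) ∈ X ↔ f (a : ZMod m) (b : ZMod m) = true))
    (hn : 1 ≤ n) (hI : I ⊆ Finset.Icc 1 (n - 1)) (l : List ℕ) (hnd : l.Nodup)
    (hlen : l.length = n) :
    XDes X l = I ↔ ∀ i ∈ Finset.Icc 1 (n - 1),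
      (f ((l.getD (i - 1) 0 : ℕ) : ZMod m) ((l.getD i 0 : ℕ) : ZMod m) = true ↔ i ∈ I) := by
  have hpair : ∀ i ∈ Finset.Icc 1 (n - 1), ((l.getD (i - 1) 0, l.getD i 0) ∈ X ↔
      f ((l.getD (i - 1) 0 : ℕ) : ZMod m) ((l.getD i 0 : ℕ) : ZMod m) = true) :=
    fun i hi => hX _ _ (getD_ne n l hnd hlen i hi hn)
  classical
  unfold XDes
  rw [hlen]
  constructor
  · intro h i hi
    constructor
    · intro hf
      rw [← h]
      exact Finset.mem_filter.2 ⟨hi, (hpair i hi).2 hf⟩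
    · intro hiI
      have := Finset.mem_filter.1 (h ▸ hiI)
      exact (hpair i hi).1 this.2
  · intro h
    ext i
    rw [Finset.mem_filter]
    constructor
    · rintro ⟨hi, hx⟩
      exact (h i hi).1 ((hpair i hi).1 hx)
    · intro hiI
      have hi := hI hiI
      exact ⟨hi, (hpair i hi).2 ((h i hi).2 hiI)⟩

private lemma count_map_eq (l : List ℕ) (hnd : l.Nodup)
    (hS : l.toFinset = Finset.Icc 1 n) (r : ZMod m) :
    (l.map (Nat.cast : ℕ → ZMod m)).count r = residueCount m n r := by
  classical
  rw [← Multiset.coe_count, ← Multiset.map_coe, Multiset.count_map]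
  rw [← Multiset.toFinset_card_of_nodup (Multiset.Nodup.filter _ ((Multiset.coe_nodup).2 hnd)),
    Multiset.toFinset_filter]
  have hq : (↑l : Multiset ℕ).toFinset = l.toFinset := rfl
  rw [hq, hS]
  unfold residueCount
  congr 1
  apply Finset.filter_congr
  intro x _
  simp [eq_comm]

private lemma getD_map_cast (l : List ℕ) (i : ℕ) :
    (l.map (Nat.cast : ℕ → ZMod m)).getD i 0 = ((l.getD i 0 : ℕ) : ZMod m) := by
  rw [show (0 : ZMod m) = ((0 : ℕ) : ZMod m) by simp, List.getD_map]


private noncomputable def prj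
    (hX : ∀ a b : ℕ, a ≠ b → ((a, b) ∈ X ↔ f (a : ZMod m) (b : ZMod m) = true))
    (hn : 1 ≤ n) (hI : I ⊆ Finset.Icc 1 (n - 1)) :
    {l : List ℕ // l.Nodup ∧ l.toFinset = Finset.Icc 1 n ∧ XDes X l = I} →
    {w : List (ZMod m) // w.length = n ∧ (∀ r : ZMod m, w.count r = residueCount m n r) ∧
      (∀ i ∈ Finset.Icc 1 (n - 1), (f (w.getD (i - 1) 0) (w.getD i 0) = true ↔ i ∈ I))} :=
  fun lp => ⟨lp.1.map (Nat.cast : ℕ → ZMod m), by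
    obtain ⟨l, hnd, hS, hdes⟩ := lp
    have hlen := len_of n l hnd hS
    refine ⟨by simp [hlen], fun r => count_map_eq n l hnd hS r, fun i hi => ?_⟩
    rw [getD_map_cast, getD_map_cast]
    exact ((xdes_iff X f n I hX hn hI l hnd hlen).1 hdes) i hi⟩

private noncomputable def fibEquiv
    (hX : ∀ a b : ℕ, a ≠ b → ((a, b) ∈ X ↔ f (a : ZMod m) (b : ZMod m) = true))
    (hn : 1 ≤ n) (hI : I ⊆ Finset.Icc 1 (n - 1))
    (w : {w : List (ZMod m) // w.length = n ∧ (∀ r : ZMod m, w.count r = residueCount m n r) ∧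
      (∀ i ∈ Finset.Icc 1 (n - 1), (f (w.getD (i - 1) 0) (w.getD i 0) = true ↔ i ∈ I))}) :
    {a : {l : List ℕ // l.Nodup ∧ l.toFinset = Finset.Icc 1 n ∧ XDes X l = I} //
        prj X f n I hX hn hI a = w} ≃
    {l : List ℕ // l.Nodup ∧ l.toFinset = Finset.Icc 1 n ∧
        l.map (Nat.cast : ℕ → ZMod m) = w.1} where
  toFun ap := ⟨ap.1.1, ap.1.2.1, ap.1.2.2.1, congrArg Subtype.val ap.2⟩
  invFun lp := ⟨⟨lp.1, lp.2.1, lp.2.2.1, by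
      have hlen : lp.1.length = n := by
        have h := congrArg List.length lp.2.2.2
        rw [List.length_map] at h
        rw [h, w.2.1]
      rw [xdes_iff X f n I hX hn hI lp.1 lp.2.1 hlen]
      intro i hi
      have h1 := w.2.2.2 i hi
      rw [← getD_map_cast, ← getD_map_cast, lp.2.2.2]
      exact h1⟩,
    Subtype.ext lp.2.2.2⟩
  left_inv ap := by
    apply Subtype.ext
    apply Subtype.ext
    rfl
  right_inv lp := rfl


end main


/-- reduction for periodic relations. Let `m ≥ 1` and suppose `X` is
periodic modulo `m` with indicator `f` (for distinct `a,b ∈ ℕ`, `(a,b) ∈ X` iff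
`f(a mod m, b mod m) = 1`). Fix `n ≥ 1` and `I ⊆ [n-1]`. Then `d_X(I;n)` equals the number
of words `w = w₁⋯w_n` over `ℤ/mℤ` with content `ℓ_r(n)` for each residue `r` and with
`f(w_i, w_{i+1}) = 1 ⟺ i ∈ I` for all `i ∈ [n-1]`, multiplied by `Π_r ℓ_r(n)!`. -/
theorem stmt5 (m : ℕ) [NeZero m] (X : Set (ℕ × ℕ)) (f : ZMod m → ZMod m → Bool)
    (hX : ∀ a b : ℕ, a ≠ b → ((a, b) ∈ X ↔ f (a : ZMod m) (b : ZMod m) = true))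
    (n : ℕ) (hn : 1 ≤ n) (I : Finset ℕ) (hI : I ⊆ Finset.Icc 1 (n - 1)) :
    dXn X I n =
      Nat.card {w : List (ZMod m) // w.length = n ∧
          (∀ r : ZMod m, w.count r = residueCount m n r) ∧
          (∀ i ∈ Finset.Icc 1 (n - 1),
            (f (w.getD (i - 1) 0) (w.getD i 0) = true ↔ i ∈ I))} *
        ∏ r : ZMod m, (residueCount m n r).factorial := by
  classical
  unfold dXn dX
  set pr := prj X f n I hX hn hI with hpr
  rw [Nat.card_congr (Equiv.sigmaFiberEquiv pr).symm]
  haveI hBfin : Finite {w : List (ZMod m) // w.length = n ∧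
      (∀ r : ZMod m, w.count r = residueCount m n r) ∧
      (∀ i ∈ Finset.Icc 1 (n - 1), (f (w.getD (i - 1) 0) (w.getD i 0) = true ↔ i ∈ I))} := by
    apply Finite.of_injective (fun w (i : Fin n) => w.1.getD i.1 0)
    intro w1 w2 h
    apply Subtype.ext
    apply List.ext_getElem (by rw [w1.2.1, w2.2.1])
    intro k h1 h2
    have hk : k < n := by rw [← w1.2.1]; exact h1
    have hfk := congrFun h ⟨k, hk⟩
    simp only at hfk
    rwa [List.getD_eq_getElem _ _ h1, List.getD_eq_getElem _ _ h2] at hfk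
  haveI : Fintype {w : List (ZMod m) // w.length = n ∧
      (∀ r : ZMod m, w.count r = residueCount m n r) ∧
      (∀ i ∈ Finset.Icc 1 (n - 1), (f (w.getD (i - 1) 0) (w.getD i 0) = true ↔ i ∈ I))} :=
    Fintype.ofFinite _
  haveI : ∀ w : {w : List (ZMod m) // w.length = n ∧
      (∀ r : ZMod m, w.count r = residueCount m n r) ∧
      (∀ i ∈ Finset.Icc 1 (n - 1), (f (w.getD (i - 1) 0) (w.getD i 0) = true ↔ i ∈ I))},
      Fintype {a // pr a = w} := by
    intro w
    haveI hfin2 : ∀ r : ZMod m, Finite {x : ℕ // x ∈ Finset.Icc 1 n ∧ (x : ZMod m) = r} :=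
      fun r => Finite.of_injective
        (fun x => (⟨x.1, x.2.1⟩ : {y : ℕ // y ∈ Finset.Icc 1 n}))
        (by
          intro a b h
          have h2 := congrArg Subtype.val h
          exact Subtype.ext h2)
    haveI : Finite {a // pr a = w} :=
      Finite.of_equiv _ ((fibEquiv X f n I hX hn hI w).trans
        (bigFiberEquiv (Finset.Icc 1 n) w.1)).symm
    exact Fintype.ofFinite _
  rw [Nat.card_eq_fintype_card, Fintype.card_sigma]
  have hcard : ∀ w : {w : List (ZMod m) // w.length = n ∧
      (∀ r : ZMod m, w.count r = residueCount m n r) ∧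
      (∀ i ∈ Finset.Icc 1 (n - 1), (f (w.getD (i - 1) 0) (w.getD i 0) = true ↔ i ∈ I))},
      Fintype.card {a // pr a = w} = ∏ r : ZMod m, (residueCount m n r).factorial := by
    intro w
    rw [← Nat.card_eq_fintype_card, Nat.card_congr (fibEquiv X f n I hX hn hI w),
      fib_card (Finset.Icc 1 n) w.1 (fun r => w.2.2.1 r)]
    rfl
  rw [Finset.sum_congr rfl (fun w _ => hcard w), Finset.sum_const, Finset.card_univ,
    smul_eq_mul, ← Nat.card_eq_fintype_card]
end

section
/- Let X ⊆ ℕ² and suppose that for each n ≥ 1 the directed graph G_n(X) (on [n], edge (i,j) iff i ≠ j and (i,j) ∉ X) is a tournament, and that the infinite digraph G(X) = ⋃_{n≥1} G_n(X) has no directed odd cycle. Then either for all n and all I ⊆ [n-1], d_X(I;n) = d(I;n), or for all n and all I ⊆ [n-1], d_X(I;n) = d([n-1]\I; n), where d(I;n) counts permutations in 𝔖_n with ordinary descent set I. -/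
open Classical in
/-- Relabelling a word by a relation isomorphism `σ` of the label set preserves the
descent statistics. -/
lemma mapProp (X Y : Set (ℕ × ℕ)) (S : Finset ℕ) (σ τ : ℕ → ℕ)
    (hσS : ∀ a ∈ S, σ a ∈ S) (hτS : ∀ a ∈ S, τ a ∈ S)
    (hτσ : ∀ a ∈ S, τ (σ a) = a) (hστ : ∀ a ∈ S, σ (τ a) = a)
    (hrel : ∀ a ∈ S, ∀ b ∈ S, a ≠ b → ((a, b) ∈ X ↔ (σ a, σ b) ∈ Y))
    (I : Finset ℕ) (w : List ℕ) (hw : w.Nodup ∧ w.toFinset = S ∧ XDes X w = I) :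
    (w.map σ).Nodup ∧ (w.map σ).toFinset = S ∧ XDes Y (w.map σ) = I := by
  obtain ⟨hnd, htf, hdes⟩ := hw
  have hmem : ∀ a ∈ w, a ∈ S := fun a ha => htf ▸ List.mem_toFinset.2 ha
  have hinj : ∀ a ∈ w, ∀ b ∈ w, σ a = σ b → a = b := by
    intro a ha b hb h
    rw [← hτσ a (hmem a ha), ← hτσ b (hmem b hb), h]
  refine ⟨hnd.map_on hinj, ?_, ?_⟩
  · ext x
    simp only [List.mem_toFinset, List.mem_map]
    constructor
    · rintro ⟨a, ha, rfl⟩; exact hσS a (hmem a ha)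
    · intro hx
      exact ⟨τ x, List.mem_toFinset.1 (htf ▸ hτS x hx), hστ x hx⟩
  · rw [← hdes]
    unfold XDes
    rw [List.length_map]
    apply Finset.filter_congr
    intro i hi
    obtain ⟨h1, h2⟩ := Finset.mem_Icc.mp hi
    have hlen : i < w.length := by omega
    have hlen' : i - 1 < w.length := by omega
    have hlm : i < (w.map σ).length := by rw [List.length_map]; exact hlen
    have hlm' : i - 1 < (w.map σ).length := by rw [List.length_map]; exact hlen'
    rw [List.getD_eq_getElem _ _ hlm, List.getD_eq_getElem _ _ hlm',
      List.getD_eq_getElem _ _ hlen, List.getD_eq_getElem _ _ hlen',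
      List.getElem_map, List.getElem_map]
    have hne : w[i - 1] ≠ w[i] := by
      intro h
      have := (List.Nodup.getElem_inj_iff hnd).mp h
      omega
    exact (hrel _ (hmem _ (List.getElem_mem _)) _ (hmem _ (List.getElem_mem _)) hne).symm

open Classical in
/-- If `σ : S → S` is a bijection carrying the relation `X` to the relation `Y`
(off the diagonal), then the `X`-descent and `Y`-descent counts on `S` agree. -/
lemma dX_eq (X Y : Set (ℕ × ℕ)) (S : Finset ℕ) (σ τ : ℕ → ℕ)
    (hσS : ∀ a ∈ S, σ a ∈ S) (hτS : ∀ a ∈ S, τ a ∈ S)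
    (hτσ : ∀ a ∈ S, τ (σ a) = a) (hστ : ∀ a ∈ S, σ (τ a) = a)
    (hrel : ∀ a ∈ S, ∀ b ∈ S, a ≠ b → ((a, b) ∈ X ↔ (σ a, σ b) ∈ Y))
    (I : Finset ℕ) : dX X I S = dX Y I S := by
  have hrel' : ∀ a ∈ S, ∀ b ∈ S, a ≠ b → ((a, b) ∈ Y ↔ (τ a, τ b) ∈ X) := by
    intro a ha b hb hab
    have hne : τ a ≠ τ b := fun h => hab (by rw [← hστ a ha, ← hστ b hb, h])
    rw [hrel (τ a) (hτS a ha) (τ b) (hτS b hb) hne, hστ a ha, hστ b hb]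
  refine Nat.card_congr ?_
  refine
    { toFun := fun w => ⟨w.1.map σ, mapProp X Y S σ τ hσS hτS hτσ hστ hrel I w.1 w.2⟩
      invFun := fun w => ⟨w.1.map τ, mapProp Y X S τ σ hτS hσS hστ hτσ hrel' I w.1 w.2⟩
      left_inv := ?_, right_inv := ?_ }
  · rintro ⟨w, hnd, htf, -⟩
    apply Subtype.ext
    simp only [List.map_map]
    have : ∀ a ∈ w, (τ ∘ σ) a = id a := fun a ha =>
      hτσ a (htf ▸ List.mem_toFinset.2 ha)
    rw [List.map_congr_left this, List.map_id]
  · rintro ⟨w, hnd, htf, -⟩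
    apply Subtype.ext
    simp only [List.map_map]
    have : ∀ a ∈ w, (σ ∘ τ) a = id a := fun a ha =>
      hστ a (htf ▸ List.mem_toFinset.2 ha)
    rw [List.map_congr_left this, List.map_id]

open Classical in
/-- From the tournament and no-odd-cycle hypotheses, produce a relabelling of `[n]`
carrying `X` to the ordinary descent relation. -/
lemma exists_relabel (X : Set (ℕ × ℕ))
    (hT : ∀ n : ℕ, ∀ i ∈ Finset.Icc 1 n, ∀ j ∈ Finset.Icc 1 n, i ≠ j →
      ((i, j) ∉ X ↔ (j, i) ∈ X))
    (hodd : ¬ ∃ k : ℕ, Odd k ∧ ∃ v : ZMod k → ℕ, Function.Injective v ∧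
      (∀ i : ZMod k, 1 ≤ v i) ∧
      (∀ i : ZMod k, v i ≠ v (i + 1) ∧ (v i, v (i + 1)) ∉ X)) (n : ℕ) :
    ∃ σ τ : ℕ → ℕ,
      (∀ a ∈ Finset.Icc 1 n, σ a ∈ Finset.Icc 1 n) ∧
      (∀ a ∈ Finset.Icc 1 n, τ a ∈ Finset.Icc 1 n) ∧
      (∀ a ∈ Finset.Icc 1 n, τ (σ a) = a) ∧
      (∀ a ∈ Finset.Icc 1 n, σ (τ a) = a) ∧
      (∀ a ∈ Finset.Icc 1 n, ∀ b ∈ Finset.Icc 1 n, a ≠ b →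
        ((a, b) ∈ X ↔ (σ a, σ b) ∈ {q : ℕ × ℕ | q.2 < q.1})) := by
  set S := Finset.Icc 1 n with hS
  have htot : ∀ a ∈ S, ∀ b ∈ S, a ≠ b → ((a, b) ∈ X ↔ (b, a) ∉ X) := by
    intro a ha b hb hab
    have := hT n b hb a ha (Ne.symm hab)
    tauto
  have htrans : ∀ a ∈ S, ∀ b ∈ S, ∀ c ∈ S, a ≠ b → b ≠ c →
      (a, b) ∈ X → (b, c) ∈ X → a ≠ c ∧ (a, c) ∈ X := by
    intro a ha b hb c hc hab hbc hXab hXbc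
    have hac : a ≠ c := by
      rintro rfl
      exact ((htot a ha b hb hab).mp hXab) hXbc
    refine ⟨hac, ?_⟩
    by_contra hXac
    have hXca : (c, a) ∈ X := by
      have := htot c hc a ha (Ne.symm hac)
      tauto
    apply hodd
    have h3 : ∀ i : ZMod 3, i = 0 ∨ i = 1 ∨ i = 2 := by decide
    set v : ZMod 3 → ℕ := fun i => if i = 0 then c else if i = 1 then b else a with hv
    have hv0 : v 0 = c := if_pos rfl
    have hv1 : v 1 = b := by
      show (if (1 : ZMod 3) = 0 then c else if (1 : ZMod 3) = 1 then b else a) = b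
      rw [if_neg (by decide), if_pos rfl]
    have hv2 : v 2 = a := by
      show (if (2 : ZMod 3) = 0 then c else if (2 : ZMod 3) = 1 then b else a) = a
      rw [if_neg (by decide), if_neg (by decide)]
    have e01 : (0 : ZMod 3) + 1 = 1 := by decide
    have e12 : (1 : ZMod 3) + 1 = 2 := by decide
    have e20 : (2 : ZMod 3) + 1 = 0 := by decide
    have h1 : ((c, b) : ℕ × ℕ) ∉ X := by have := htot b hb c hc hbc; tauto
    have h2 : ((b, a) : ℕ × ℕ) ∉ X := by have := htot a ha b hb hab; tauto
    have hcb : c ≠ b := Ne.symm hbc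
    have hba : b ≠ a := Ne.symm hab
    have hca : c ≠ a := Ne.symm hac
    refine ⟨3, by decide, v, ?_, ?_, ?_⟩
    · intro i j h
      rcases h3 i with rfl | rfl | rfl <;> rcases h3 j with rfl | rfl | rfl
      · rfl
      · rw [hv0, hv1] at h; exact absurd h hcb
      · rw [hv0, hv2] at h; exact absurd h hca
      · rw [hv1, hv0] at h; exact absurd h.symm hcb
      · rfl
      · rw [hv1, hv2] at h; exact absurd h hba
      · rw [hv2, hv0] at h; exact absurd h.symm hca
      · rw [hv2, hv1] at h; exact absurd h.symm hba
      · rfl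
    · intro i
      have hp1 := (Finset.mem_Icc.mp ha).1
      have hp2 := (Finset.mem_Icc.mp hb).1
      have hp3 := (Finset.mem_Icc.mp hc).1
      rcases h3 i with rfl | rfl | rfl
      · rw [hv0]; exact hp3
      · rw [hv1]; exact hp2
      · rw [hv2]; exact hp1
    · intro i
      rcases h3 i with rfl | rfl | rfl
      · rw [e01, hv0, hv1]; exact ⟨hcb, h1⟩
      · rw [e12, hv1, hv2]; exact ⟨hba, h2⟩
      · rw [e20, hv2, hv0]; exact ⟨hac, hXac⟩
  -- the rank function
  set σ : ℕ → ℕ := fun a => (S.filter (fun y => y = a ∨ ((a, y) ∈ X ∧ y ≠ a))).card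
    with hσdef
  have hmemself : ∀ a ∈ S, a ∈ S.filter (fun y => y = a ∨ ((a, y) ∈ X ∧ y ≠ a)) :=
    fun a ha => Finset.mem_filter.2 ⟨ha, Or.inl rfl⟩
  have hlt : ∀ a ∈ S, ∀ b ∈ S, a ≠ b → (a, b) ∈ X → σ b < σ a := by
    intro a ha b hb hab hX
    have hsub : S.filter (fun y => y = b ∨ ((b, y) ∈ X ∧ y ≠ b)) ⊆
        S.filter (fun y => y = a ∨ ((a, y) ∈ X ∧ y ≠ a)) := by
      intro y hy
      rcases Finset.mem_filter.mp hy with ⟨hyS, hy'⟩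
      refine Finset.mem_filter.2 ⟨hyS, ?_⟩
      rcases hy' with rfl | ⟨hXy, hyb⟩
      · exact Or.inr ⟨hX, Ne.symm hab⟩
      · have h := htrans a ha b hb y hyS hab (Ne.symm hyb) hX hXy
        exact Or.inr ⟨h.2, fun hh => h.1 hh.symm⟩
    have hna : a ∉ S.filter (fun y => y = b ∨ ((b, y) ∈ X ∧ y ≠ b)) := by
      intro hmem
      rcases (Finset.mem_filter.mp hmem).2 with rfl | ⟨hXba, _⟩
      · exact hab rfl
      · exact (htot a ha b hb hab).mp hX hXba
    exact Finset.card_lt_card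
      ((Finset.ssubset_iff_of_subset hsub).2 ⟨a, hmemself a ha, hna⟩)
  have hσmem : ∀ a ∈ S, σ a ∈ S := by
    intro a ha
    rw [hS, Finset.mem_Icc]
    constructor
    · exact Finset.card_pos.2 ⟨a, hmemself a ha⟩
    · calc σ a ≤ S.card := Finset.card_le_card (Finset.filter_subset _ _)
        _ = n := by rw [hS, Nat.card_Icc]; omega
  have hinjOn : ∀ a ∈ S, ∀ b ∈ S, σ a = σ b → a = b := by
    intro a ha b hb h
    by_contra hab
    rcases Classical.em ((a, b) ∈ X) with hX | hX
    · have := hlt a ha b hb hab hX; omega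
    · have hXba : (b, a) ∈ X := by have := htot a ha b hb hab; tauto
      have := hlt b hb a ha (Ne.symm hab) hXba; omega
  have himg : S.image σ = S := by
    apply Finset.eq_of_subset_of_card_le
    · intro x hx
      rcases Finset.mem_image.mp hx with ⟨a, ha, rfl⟩
      exact hσmem a ha
    · rw [Finset.card_image_of_injOn (fun a ha b hb => hinjOn a ha b hb)]
  set τ : ℕ → ℕ := fun x => if h : ∃ b, b ∈ S ∧ σ b = x then h.choose else 0 with hτdef
  have hτ : ∀ x ∈ S, τ x ∈ S ∧ σ (τ x) = x := by
    intro x hx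
    have hex : ∃ b, b ∈ S ∧ σ b = x := by
      rcases Finset.mem_image.mp (himg ▸ hx) with ⟨b, hb, hbx⟩
      exact ⟨b, hb, hbx⟩
    rw [hτdef]
    simp only [dif_pos hex]
    exact hex.choose_spec
  have hτσ : ∀ a ∈ S, τ (σ a) = a := by
    intro a ha
    obtain ⟨h1, h2⟩ := hτ (σ a) (hσmem a ha)
    exact hinjOn _ h1 a ha h2
  refine ⟨σ, τ, hσmem, fun a ha => (hτ a ha).1, hτσ, fun a ha => (hτ a ha).2, ?_⟩
  intro a ha b hb hab
  simp only [Set.mem_setOf_eq]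
  constructor
  · exact hlt a ha b hb hab
  · intro hltab
    by_contra hX
    have hXba : (b, a) ∈ X := by have := htot a ha b hb hab; tauto
    have := hlt b hb a ha (Ne.symm hab) hXba
    omega

/-- Suppose for each `n ≥ 1` the digraph `G_n(X)` on `[n]`
(edge `(i,j)` iff `i ≠ j` and `(i,j) ∉ X`) is a tournament, and the infinite digraph
`G(X) = ⋃_{n ≥ 1} G_n(X)` (on the positive integers) has no directed odd cycle, i.e. there
is no odd `k` and injective `v : ℤ/kℤ → ℕ` into the positive integers with every
`(v i, v (i+1))` an arc of `G(X)`. Then either `d_X(I;n) = d(I;n)` for all `n` and all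
`I ⊆ [n-1]`, or `d_X(I;n) = d([n-1]∖I;n)` for all `n` and all `I ⊆ [n-1]`, where `d(I;n)`
counts permutations of `[n]` with ordinary descent set `I` (the relation
`{(a,b) : a > b}`). -/
theorem stmt9 (X : Set (ℕ × ℕ))
    (hT : ∀ n : ℕ, ∀ i ∈ Finset.Icc 1 n, ∀ j ∈ Finset.Icc 1 n, i ≠ j →
      ((i, j) ∉ X ↔ (j, i) ∈ X))
    (hodd : ¬ ∃ k : ℕ, Odd k ∧ ∃ v : ZMod k → ℕ, Function.Injective v ∧
      (∀ i : ZMod k, 1 ≤ v i) ∧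
      (∀ i : ZMod k, v i ≠ v (i + 1) ∧ (v i, v (i + 1)) ∉ X)) :
    (∀ n : ℕ, ∀ I ⊆ Finset.Icc 1 (n - 1),
        dXn X I n = dXn {q : ℕ × ℕ | q.2 < q.1} I n) ∨
    (∀ n : ℕ, ∀ I ⊆ Finset.Icc 1 (n - 1),
        dXn X I n = dXn {q : ℕ × ℕ | q.2 < q.1} ((Finset.Icc 1 (n - 1)) \ I) n) := by
  left
  intro n I _
  obtain ⟨σ, τ, hσS, hτS, hτσ, hστ, hrel⟩ := exists_relabel X hT hodd n
  exact dX_eq X _ (Finset.Icc 1 n) σ τ hσS hτS hτσ hστ hrel I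
end

section
/- Let X ⊆ ℕ² and n ≥ 1, and let D = G_n(X) be the digraph on [n] with edge (i,j) iff i ≠ j and (i,j) ∉ X, with complement D̄ (edges are the pairs (i,j), i ≠ j, not in D). Then d_X(∅;n) = Σ_{σ ∈ 𝔖_{[n]}(D, D̄)} (−1)^{φ(σ)}, where 𝔖_{[n]}(D, D̄) is the set of permutations σ of [n] each of whose cycles is a D-cycle or a D̄-cycle, and φ(σ) = Σ (|γ| − 1) over the nontrivial cycles γ of σ that are D̄-cycles. -/
/-- A (nontrivial) cycle `c` of a permutation of `Fin n` is a `D`-cycle for `D = G_n(X)`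
(vertex `x : Fin n` ↔ label `x + 1 ∈ [n]`; arc `(i,j)` iff `i ≠ j` and `(i,j) ∉ X`) when all
the arcs `(x, c x)` along the cycle lie in `D`. -/
def isGcycle (X : Set (ℕ × ℕ)) {n : ℕ} (c : Equiv.Perm (Fin n)) : Prop :=
  ∀ x ∈ c.support, ((x : ℕ) + 1) ≠ ((c x : ℕ) + 1) ∧ (((x : ℕ) + 1, (c x : ℕ) + 1) ∉ X)

/-- A cycle `c` is a `D̄`-cycle for the complement `D̄` of `D = G_n(X)` (arc `(i,j)` iff
`i ≠ j` and `(i,j) ∈ X`) when all the arcs `(x, c x)` along the cycle lie in `D̄`. -/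
def isGbarCycle (X : Set (ℕ × ℕ)) {n : ℕ} (c : Equiv.Perm (Fin n)) : Prop :=
  ∀ x ∈ c.support, ((x : ℕ) + 1) ≠ ((c x : ℕ) + 1) ∧ (((x : ℕ) + 1, (c x : ℕ) + 1) ∈ X)

/-!
Inclusion–exclusion over the descents of a word `g` writes `d_X(∅; n)` as a signed count of
pairs `(g, T)`, `T` a set of letters each followed in `g` by an out-neighbour in `D̄`. Recording
the successor of each letter of `T` turns `T` into a path system: a set `M` with an injective,
acyclic successor map `s` along arcs of `D̄`. The words realising a given path system correspond
to a cyclic arrangement (a single-orbit permutation extending `s`; there are `(n - |M| - 1)!`,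
by splicing points out) together with a first letter outside `s(M)`, so there are `(n - |M|)!`
of them; and `(n - |M|)!` is also the number of permutations `τ` extending `s`. Regrouping by
`τ` gives `Σ_τ Σ_M (-1)^|M|`, over the sets `M` of arcs of `τ` that lie in `D̄` and contain no
whole cycle. This inner sum factors over the cycles `γ` of `τ`: it is `(-1)^(|γ| - 1)` for a
`D̄`-cycle, `1` for a `D`-cycle and `0` otherwise.
-/

namespace GrinbergStanley

open Equiv Finset Function
open scoped Nat

section SingleOrbit

def IsSingleOrbit {α : Type*} (σ : Perm α) : Prop := ∀ a b, ∃ k : ℕ, (σ ^ k) a = b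

variable {V : Type*} [DecidableEq V]

/-- Splices `x` out of its cycle: `σ⁻¹ x ↦ σ x`. -/
def removePoint (x : V) (σ : Perm V) : Perm {y // y ≠ x} :=
  (swap x (σ x) * σ).subtypePerm fun _ =>
    ((swap x (σ x) * σ).injective.eq_iff' (by simp)).not

theorem coe_removePoint_apply (x : V) (σ : Perm V) (y : {y // y ≠ x}) :
    (removePoint x σ y : V) = swap x (σ x) (σ y) := rfl

theorem removePoint_apply_of_apply_ne {x : V} {σ : Perm V} {y : {y // y ≠ x}} (hy : σ y ≠ x) :
    (removePoint x σ y : V) = σ y :=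
  swap_apply_of_ne_of_ne hy (σ.injective.ne y.2)

def decomposeAt (x : V) : Perm V ≃ V × Perm {y // y ≠ x} where
  toFun σ := (σ x, removePoint x σ)
  invFun p := swap x p.1 * Perm.ofSubtype p.2
  left_inv σ := by
    ext y
    by_cases hy : y = x
    · subst hy; simp [Perm.ofSubtype_apply_of_not_mem]
    · simp [Perm.ofSubtype_apply_of_mem (removePoint x σ) hy, coe_removePoint_apply]
  right_inv p := by
    have hx : (swap x p.1 * Perm.ofSubtype p.2) x = p.1 := by
      simp [Perm.ofSubtype_apply_of_not_mem]
    refine Prod.ext hx (Perm.ext fun y => Subtype.ext ?_)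
    rw [coe_removePoint_apply, hx]
    simp

theorem exists_pow_eq_pow_removePoint {x : V} {σ : Perm V} (a : {y // y ≠ x}) (k' : ℕ) :
    ∃ k : ℕ, (σ ^ k) a = ((removePoint x σ ^ k') a : V) := by
  induction k' with
  | zero => exact ⟨0, rfl⟩
  | succ k' ih =>
    obtain ⟨k, hk⟩ := ih
    set b := (removePoint x σ ^ k') a
    rw [pow_succ', Perm.mul_apply]
    by_cases hb : σ b = x
    · refine ⟨k + 1 + 1, ?_⟩
      rw [coe_removePoint_apply, hb, swap_apply_left]
      simp only [pow_succ', Perm.mul_apply, hk, hb]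
    · exact ⟨k + 1, by rw [removePoint_apply_of_apply_ne hb, pow_succ', Perm.mul_apply, hk]⟩

theorem exists_pow_removePoint_eq {x : V} {σ : Perm V} (hx : σ x ≠ x) (a : {y // y ≠ x}) :
    ∀ k : ℕ, (σ ^ k) a ≠ x → ∃ k' : ℕ, ((removePoint x σ ^ k') a : V) = (σ ^ k) a
  | 0, _ => ⟨0, rfl⟩
  | k + 1, hk => by
    rw [pow_succ', Perm.mul_apply] at hk ⊢
    by_cases hprev : (σ ^ k) a = x
    · -- the orbit of `removePoint x σ` goes from `σ⁻¹ x` straight to `σ x`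
      cases k with
      | zero => exact absurd hprev a.2
      | succ k =>
        have hk' : (σ ^ k) a ≠ x := fun h => hx (by rwa [pow_succ', Perm.mul_apply, h] at hprev)
        obtain ⟨k', hk'⟩ := exists_pow_removePoint_eq hx a k hk'
        refine ⟨k' + 1, ?_⟩
        rw [pow_succ', Perm.mul_apply, coe_removePoint_apply, hk', ← Perm.mul_apply σ,
          ← pow_succ', hprev, swap_apply_left]
    · obtain ⟨k', hk'⟩ := exists_pow_removePoint_eq hx a k hprev
      refine ⟨k' + 1, ?_⟩
      rw [pow_succ', Perm.mul_apply, removePoint_apply_of_apply_ne (by rwa [hk']), hk']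

theorem isSingleOrbit_removePoint_iff {x : V} {σ : Perm V} (hx : σ x ≠ x) :
    IsSingleOrbit (removePoint x σ) ↔ IsSingleOrbit σ := by
  constructor
  · intro h
    have to_x : ∀ a, ∃ k : ℕ, (σ ^ k) a = x := by
      intro a
      by_cases ha : a = x
      · exact ⟨0, ha⟩
      have hx' : σ.symm x ≠ x := fun h' => hx (by simpa using congrArg σ h'.symm)
      obtain ⟨k', hk'⟩ := h ⟨a, ha⟩ ⟨σ.symm x, hx'⟩
      obtain ⟨k, hk⟩ := exists_pow_eq_pow_removePoint ⟨a, ha⟩ k'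
      exact ⟨k + 1, by rw [pow_succ', Perm.mul_apply, hk, hk', apply_symm_apply]⟩
    have from_x : ∀ b, ∃ k : ℕ, (σ ^ k) x = b := by
      intro b
      by_cases hb : b = x
      · exact ⟨0, hb.symm⟩
      obtain ⟨k', hk'⟩ := h ⟨σ x, hx⟩ ⟨b, hb⟩
      obtain ⟨k, hk⟩ := exists_pow_eq_pow_removePoint ⟨σ x, hx⟩ k'
      exact ⟨k + 1, by rw [pow_succ, Perm.mul_apply, hk, hk']⟩
    intro a b
    obtain ⟨k₁, hk₁⟩ := to_x a
    obtain ⟨k₂, hk₂⟩ := from_x b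
    exact ⟨k₂ + k₁, by rw [pow_add, Perm.mul_apply, hk₁, hk₂]⟩
  · intro h a b
    obtain ⟨k, hk⟩ := h a b
    obtain ⟨k', hk'⟩ := exists_pow_removePoint_eq hx a k (hk ▸ b.2)
    exact ⟨k', Subtype.ext (hk'.trans hk)⟩

theorem card_subtype_perm_eq_mul (x : V) {C : Perm V → Prop} {P : V → Prop}
    {Q : Perm {y // y ≠ x} → Prop} (h : ∀ σ, C σ ↔ P (σ x) ∧ Q (removePoint x σ)) :
    Nat.card {σ // C σ} = Nat.card {v // P v} * Nat.card {ρ // Q ρ} := by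
  rw [← Nat.card_prod, ← Nat.card_congr subtypeProdEquivProd]
  exact Nat.card_congr ((decomposeAt x).subtypeEquiv h)

/-- Contracting the arc `x → s x`: the arc into `x` is redirected to `s x`. -/
def contractArc (s : V → V) {x : V} (hx : s x ≠ x) (y : {y // y ≠ x}) : {y // y ≠ x} :=
  if h : s y = x then ⟨s x, hx⟩ else ⟨s y, h⟩

theorem coe_contractArc {s : V → V} {x : V} (hx : s x ≠ x) {y : {y // y ≠ x}}
    (hy : s y ≠ s x) : (contractArc s hx y : V) = swap x (s x) (s y) := by
  unfold contractArc
  split_ifs with h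
  · rw [h, swap_apply_left]
  · exact (swap_apply_of_ne_of_ne h hy).symm

variable {M : Finset V} {s : V → V} {x : V}

theorem injOn_contractArc (hinj : Set.InjOn s M) (hxM : x ∈ M) (hx : s x ≠ x) :
    Set.InjOn (contractArc s hx) (M.subtype (· ≠ x)) := by
  intro y hy z hz hyz
  rw [mem_coe, mem_subtype] at hy hz
  rw [Subtype.ext_iff, coe_contractArc hx (hinj.ne hy hxM y.2),
    coe_contractArc hx (hinj.ne hz hxM z.2), (swap x (s x)).injective.eq_iff] at hyz
  exact Subtype.ext (hinj hy hz hyz)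

theorem rank_contractArc {f : V → ℕ} (hf : ∀ y ∈ M, f (s y) < f y) (hxM : x ∈ M)
    (hx : s x ≠ x) : ∀ y ∈ M.subtype (· ≠ x), f (contractArc s hx y) < f y := by
  intro y hy
  rw [mem_subtype] at hy
  unfold contractArc
  split_ifs with h
  · exact (hf x hxM).trans (by simpa [h] using hf y hy)
  · exact hf y hy

theorem eqOn_iff_removePoint (hinj : Set.InjOn s M) (hxM : x ∈ M) (hx : s x ≠ x)
    {σ : Perm V} (hσ : σ x = s x) :
    Set.EqOn σ s M ↔ Set.EqOn (removePoint x σ) (contractArc s hx) (M.subtype (· ≠ x)) := by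
  have hne : ∀ y : {y // y ≠ x}, (y : V) ∈ M → s y ≠ s x := fun y hy =>
    hinj.ne hy hxM y.2
  simp only [Set.EqOn, mem_coe, mem_subtype, Subtype.ext_iff, coe_removePoint_apply, hσ]
  constructor
  · intro h y hy
    rw [h hy, coe_contractArc hx (hne y hy)]
  · intro h y hy
    by_cases hyx : y = x
    · rw [hyx, hσ]
    · have := @h ⟨y, hyx⟩ hy
      rwa [coe_contractArc hx (hne ⟨y, hyx⟩ hy), (swap x (s x)).injective.eq_iff] at this

theorem card_isSingleOrbit_eqOn_contractArc (hinj : Set.InjOn s M) (hxM : x ∈ M)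
    (hx : s x ≠ x) :
    Nat.card {σ : Perm V // Set.EqOn σ s M ∧ IsSingleOrbit σ} =
      Nat.card {ρ : Perm {y // y ≠ x} //
        Set.EqOn ρ (contractArc s hx) (M.subtype (· ≠ x)) ∧ IsSingleOrbit ρ} := by
  rw [card_subtype_perm_eq_mul x (P := (· = s x)) fun σ => ?_, Nat.card_unique, one_mul]
  constructor
  · rintro ⟨hext, hσ⟩
    have hσx : σ x = s x := hext hxM
    exact ⟨hσx, (eqOn_iff_removePoint hinj hxM hx hσx).mp hext,
      (isSingleOrbit_removePoint_iff (by rwa [hσx])).mpr hσ⟩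
  · rintro ⟨hσx, hext, hρ⟩
    exact ⟨(eqOn_iff_removePoint hinj hxM hx hσx).mpr hext,
      (isSingleOrbit_removePoint_iff (by rwa [hσx])).mp hρ⟩

theorem card_isSingleOrbit_eq_mul [Fintype V] (x : V) (hV : 1 < Fintype.card V) :
    Nat.card {σ : Perm V // IsSingleOrbit σ} =
      (Fintype.card V - 1) * Nat.card {ρ : Perm {y // y ≠ x} // IsSingleOrbit ρ} := by
  have hfix : ∀ σ : Perm V, IsSingleOrbit σ → σ x ≠ x := fun σ hσ hσx => by
    obtain ⟨y, hy⟩ := Fintype.exists_ne_of_one_lt_card hV x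
    obtain ⟨k, hk⟩ := hσ x y
    exact hy (by rw [← hk, Perm.pow_apply_eq_self_of_apply_eq_self hσx])
  rw [card_subtype_perm_eq_mul x (P := (· ≠ x)) fun σ => ?_, Nat.card_eq_fintype_card,
    Fintype.card_subtype_compl, Fintype.card_subtype_eq]
  exact ⟨fun h => ⟨hfix σ h, (isSingleOrbit_removePoint_iff (hfix σ h)).mpr h⟩,
    fun h => (isSingleOrbit_removePoint_iff h.1).mp h.2⟩

omit [DecidableEq V] in
theorem card_isSingleOrbit_eqOn_of_subsingleton [Subsingleton V] :
    Nat.card {σ : Perm V // Set.EqOn σ s M ∧ IsSingleOrbit σ} = 1 :=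
  Nat.card_eq_one_iff_unique.mpr
    ⟨inferInstance, ⟨⟨1, fun _ _ => Subsingleton.elim _ _, fun _ _ => ⟨0, Subsingleton.elim _ _⟩⟩⟩⟩

theorem card_isSingleOrbit_eqOn [Fintype V] (hinj : Set.InjOn s M) {f : V → ℕ}
    (hf : ∀ x ∈ M, f (s x) < f x) :
    Nat.card {σ : Perm V // Set.EqOn σ s M ∧ IsSingleOrbit σ} = (Fintype.card V - #M - 1)! := by
  induction hN : Fintype.card V generalizing V with
  | zero =>
    have := Fintype.card_eq_zero_iff.mp hN
    rw [card_isSingleOrbit_eqOn_of_subsingleton, Nat.zero_sub, Nat.zero_sub, Nat.factorial_zero]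
  | succ N ih =>
    have hcard : ∀ x : V, Fintype.card {y // y ≠ x} = N := fun x => by
      rw [Fintype.card_subtype_compl, Fintype.card_subtype_eq, hN, Nat.add_sub_cancel]
    rcases M.eq_empty_or_nonempty with rfl | ⟨x, hxM⟩
    · rcases Nat.eq_zero_or_pos N with rfl | hNpos
      · have := Fintype.card_le_one_iff_subsingleton.mp hN.le
        rw [card_isSingleOrbit_eqOn_of_subsingleton]
        rfl
      obtain ⟨x⟩ : Nonempty V := Fintype.card_pos_iff.mp (by omega)
      have ih_empty := ih (M := ∅) (s := id) (by simp) (f := fun _ => 0) (by simp) (hcard x)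
      simp only [coe_empty, Set.eqOn_empty, true_and, card_empty] at ih_empty ⊢
      rw [card_isSingleOrbit_eq_mul x (by omega), ih_empty, hN]
      simpa using Nat.mul_factorial_pred hNpos.ne'
    · have hx : s x ≠ x := fun h => (hf x hxM).ne (by rw [h])
      rw [card_isSingleOrbit_eqOn_contractArc hinj hxM hx, ih (injOn_contractArc hinj hxM hx)
          (f := fun y => f y) (rank_contractArc hf hxM hx) (hcard x),
        card_subtype, filter_ne', card_erase_of_mem hxM]
      have := card_pos.mpr ⟨x, hxM⟩
      congr 1
      omega

end SingleOrbit

section ArcSets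

variable {V : Type*} [Fintype V] [DecidableEq V] (R : V → V → Prop)

open Classical in
/-- `x ∈ M` stands for the arc `x → τ x`; the arcs must lie in `R` and must not contain a whole
cycle of `τ`. -/
noncomputable def acyclicArcSets (τ : Perm V) : Finset (Finset V) :=
  univ.filter fun M => (∀ x ∈ M, R x (τ x)) ∧ ∀ x, ∃ k : ℕ, (τ ^ k) x ∉ M

open Classical in
noncomputable def cycleWeight (c : Perm V) : ℤ :=
  if ∀ x ∈ c.support, R x (c x) then (-1) ^ (#c.support - 1)
  else if ∀ x ∈ c.support, ¬ R x (c x) then 1 else 0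

variable {R} {σ τ : Perm V} {M M₁ M₂ : Finset V}

theorem mem_acyclicArcSets :
    M ∈ acyclicArcSets R τ ↔ (∀ x ∈ M, R x (τ x)) ∧ ∀ x, ∃ k : ℕ, (τ ^ k) x ∉ M := by
  simp [acyclicArcSets]

theorem subset_support_of_mem_acyclicArcSets (h : M ∈ acyclicArcSets R τ) : M ⊆ τ.support := by
  intro x hxM
  rw [Perm.mem_support]
  intro hx
  obtain ⟨k, hk⟩ := (mem_acyclicArcSets.mp h).2 x
  exact hk (by rwa [Perm.pow_apply_eq_self_of_apply_eq_self hx])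

theorem acyclicArcSets_one : acyclicArcSets R (1 : Perm V) = {∅} := by
  ext M
  refine ⟨fun h => ?_, fun h => ?_⟩
  · simpa using subset_support_of_mem_acyclicArcSets h
  · rw [mem_singleton.mp h, mem_acyclicArcSets]
    exact ⟨by simp, fun x => ⟨0, notMem_empty x⟩⟩

open Classical in
theorem mem_acyclicArcSets_iff_of_isCycle (hc : τ.IsCycle) :
    M ∈ acyclicArcSets R τ ↔ M ⊆ τ.support.filter (fun x => R x (τ x)) ∧ M ≠ τ.support := by
  rw [mem_acyclicArcSets]
  constructor
  · rintro ⟨hR, horb⟩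
    refine ⟨fun x hx => mem_filter.mpr ⟨?_, hR x hx⟩, ?_⟩
    · exact subset_support_of_mem_acyclicArcSets (mem_acyclicArcSets.mpr ⟨hR, horb⟩) hx
    · rintro rfl
      obtain ⟨x, hx⟩ := hc.nonempty_support
      obtain ⟨k, hk⟩ := horb x
      exact hk (Perm.pow_apply_mem_support.mpr hx)
  · rintro ⟨hMD, hM⟩
    have hMsupp : M ⊆ τ.support := hMD.trans (filter_subset _ _)
    refine ⟨fun x hx => (mem_filter.mp (hMD hx)).2, fun x => ?_⟩
    by_cases hx : x ∈ τ.support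
    · obtain ⟨y, hy, hyM⟩ := not_subset.mp fun h => hM (hMsupp.antisymm h)
      obtain ⟨k, hk⟩ := hc.exists_pow_eq (Perm.mem_support.mp hx) (Perm.mem_support.mp hy)
      exact ⟨k, hk ▸ hyM⟩
    · exact ⟨0, fun h => hx (hMsupp h)⟩

theorem sum_acyclicArcSets_of_isCycle (hc : τ.IsCycle) :
    ∑ M ∈ acyclicArcSets R τ, (-1 : ℤ) ^ #M = cycleWeight R τ := by
  classical
  set D := τ.support.filter (fun x => R x (τ x))
  have hsets : acyclicArcSets R τ = D.powerset.erase τ.support := by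
    ext M
    rw [mem_acyclicArcSets_iff_of_isCycle hc, mem_erase, mem_powerset, and_comm]
  have hsupp : τ.support ∈ D.powerset ↔ ∀ x ∈ τ.support, R x (τ x) := by
    simp +contextual [D, subset_iff]
  rw [hsets, cycleWeight]
  split_ifs with hall hnone
  · have hD : D = τ.support := filter_true_of_mem hall
    rw [sum_erase_eq_sub (hsupp.mpr hall), sum_powerset_neg_one_pow_card,
      if_neg (hD ▸ hc.nonempty_support.ne_empty), zero_sub]
    obtain ⟨m, hm⟩ := Nat.exists_eq_add_of_lt hc.two_le_card_support
    rw [hm, Nat.add_sub_cancel, pow_succ]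
    ring
  · rw [erase_eq_of_notMem (mt hsupp.mp hall), sum_powerset_neg_one_pow_card,
      if_pos (filter_false_of_mem hnone)]
  · rw [erase_eq_of_notMem (mt hsupp.mp hall), sum_powerset_neg_one_pow_card,
      if_neg fun hD => hnone fun x hx hR => (filter_eq_empty_iff.mp hD) hx hR]

theorem pow_mul_apply_of_notMem_support (h : Commute σ τ) {x : V} (hx : x ∉ τ.support) (k : ℕ) :
    ((σ * τ) ^ k) x = (σ ^ k) x := by
  rw [h.mul_pow, Perm.mul_apply,
    Perm.pow_apply_eq_self_of_apply_eq_self (Perm.notMem_support.mp hx)]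

theorem inter_support_mem_acyclicArcSets (h : σ.Disjoint τ) (hM : M ∈ acyclicArcSets R (σ * τ)) :
    M ∩ σ.support ∈ acyclicArcSets R σ := by
  obtain ⟨hR, horb⟩ := mem_acyclicArcSets.mp hM
  refine mem_acyclicArcSets.mpr ⟨fun x hx => ?_, fun x => ?_⟩
  · obtain ⟨hxM, hxσ⟩ := mem_inter.mp hx
    simpa [Perm.notMem_support.mp (h.mem_imp hxσ)] using hR x hxM
  · by_cases hxσ : x ∈ σ.support
    · obtain ⟨k, hk⟩ := horb x
      rw [pow_mul_apply_of_notMem_support h.commute (h.mem_imp hxσ)] at hk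
      exact ⟨k, fun h' => hk (mem_inter.mp h').1⟩
    · exact ⟨0, fun h' => hxσ (mem_inter.mp h').2⟩

theorem exists_pow_mul_apply_notMem_union (h : σ.Disjoint τ) (h₁ : M₁ ∈ acyclicArcSets R σ)
    (h₂ : M₂ ⊆ τ.support) {x : V} (hx : x ∉ τ.support) :
    ∃ k : ℕ, ((σ * τ) ^ k) x ∉ M₁ ∪ M₂ := by
  obtain ⟨k, hk⟩ := (mem_acyclicArcSets.mp h₁).2 x
  refine ⟨k, ?_⟩
  rw [pow_mul_apply_of_notMem_support h.commute hx, mem_union, not_or]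
  refine ⟨hk, fun hk₂ => ?_⟩
  by_cases hxσ : x ∈ σ.support
  · exact h.mem_imp (Perm.pow_apply_mem_support.mpr hxσ) (h₂ hk₂)
  · rw [Perm.pow_apply_eq_self_of_apply_eq_self (Perm.notMem_support.mp hxσ)] at hk₂
    exact hx (h₂ hk₂)

theorem union_mem_acyclicArcSets (h : σ.Disjoint τ) (h₁ : M₁ ∈ acyclicArcSets R σ)
    (h₂ : M₂ ∈ acyclicArcSets R τ) : M₁ ∪ M₂ ∈ acyclicArcSets R (σ * τ) := by
  have hs₁ := subset_support_of_mem_acyclicArcSets h₁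
  have hs₂ := subset_support_of_mem_acyclicArcSets h₂
  refine mem_acyclicArcSets.mpr ⟨fun x hx => ?_, fun x => ?_⟩
  · rcases mem_union.mp hx with hx | hx
    · simpa [Perm.notMem_support.mp (h.mem_imp (hs₁ hx))] using
        (mem_acyclicArcSets.mp h₁).1 x hx
    · simpa [h.commute.eq, Perm.notMem_support.mp (h.symm.mem_imp (hs₂ hx))] using
        (mem_acyclicArcSets.mp h₂).1 x hx
  · rcases h x with hx | hx
    · rw [h.commute.eq, union_comm]
      exact exists_pow_mul_apply_notMem_union h.symm h₂ hs₁ (Perm.notMem_support.mpr hx)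
    · exact exists_pow_mul_apply_notMem_union h h₁ hs₂ (Perm.notMem_support.mpr hx)

theorem sum_acyclicArcSets_mul (h : σ.Disjoint τ) :
    ∑ M ∈ acyclicArcSets R (σ * τ), (-1 : ℤ) ^ #M =
      (∑ M ∈ acyclicArcSets R σ, (-1 : ℤ) ^ #M) * ∑ M ∈ acyclicArcSets R τ, (-1 : ℤ) ^ #M := by
  have hsupp := h.disjoint_support
  have hsplit : ∀ M ∈ acyclicArcSets R (σ * τ), M ∩ σ.support ∪ M ∩ τ.support = M :=
    fun M hM => by
      rw [← inter_union_distrib_left, inter_eq_left]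
      exact (subset_support_of_mem_acyclicArcSets hM).trans (Perm.support_mul_le σ τ)
  rw [sum_mul_sum, ← sum_product']
  refine sum_nbij' (fun M => (M ∩ σ.support, M ∩ τ.support)) (fun p => p.1 ∪ p.2)
    (fun M hM => ?_) (fun p hp => ?_) (fun M hM => ?_) (fun p hp => ?_) (fun M hM => ?_)
  · exact mem_product.mpr ⟨inter_support_mem_acyclicArcSets h hM,
      inter_support_mem_acyclicArcSets h.symm (h.commute.eq ▸ hM)⟩
  · exact union_mem_acyclicArcSets h (mem_product.mp hp).1 (mem_product.mp hp).2
  · exact hsplit M hM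
  · obtain ⟨h₁, h₂⟩ := mem_product.mp hp
    have hs₁ := subset_support_of_mem_acyclicArcSets h₁
    have hs₂ := subset_support_of_mem_acyclicArcSets h₂
    refine Prod.ext ?_ ?_ <;> dsimp only
    · rw [union_inter_distrib_right, inter_eq_left.mpr hs₁,
        disjoint_iff_inter_eq_empty.mp (hsupp.symm.mono_left hs₂), union_empty]
    · rw [union_inter_distrib_right, inter_eq_left.mpr hs₂,
        disjoint_iff_inter_eq_empty.mp (hsupp.mono_left hs₁), empty_union]
  · rw [← pow_add, ← card_union_of_disjoint (hsupp.mono inter_subset_right inter_subset_right),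
      hsplit M hM]

theorem sum_acyclicArcSets_eq_prod_cycleWeight (τ : Perm V) :
    ∑ M ∈ acyclicArcSets R τ, (-1 : ℤ) ^ #M = ∏ c ∈ τ.cycleFactorsFinset, cycleWeight R c := by
  induction τ using Perm.cycle_induction_on with
  | base_one => simp [acyclicArcSets_one]
  | base_cycles c hc =>
    rw [hc.cycleFactorsFinset_eq_singleton, prod_singleton, sum_acyclicArcSets_of_isCycle hc]
  | induction_disjoint σ τ h _ hσ hτ =>
    rw [sum_acyclicArcSets_mul h, hσ, hτ, h.cycleFactorsFinset_mul_eq_union,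
      prod_union h.disjoint_cycleFactorsFinset]

open Classical in
theorem prod_cycleWeight (S : Finset (Perm V)) :
    ∏ c ∈ S, cycleWeight R c =
      if ∀ c ∈ S, (∀ x ∈ c.support, ¬ R x (c x)) ∨ ∀ x ∈ c.support, R x (c x) then
        (-1) ^ ∑ c ∈ S.filter (fun c => ∀ x ∈ c.support, R x (c x)), (#c.support - 1)
      else 0 := by
  split_ifs with hall
  · rw [← prod_pow_eq_pow_sum, prod_filter]
    refine prod_congr rfl fun c hc => ?_
    unfold cycleWeight
    split_ifs with hR hnR <;> first | rfl | exact absurd (hall c hc) (by tauto)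
  · obtain ⟨c, hc, hc'⟩ := not_forall₂.mp hall
    rw [not_or] at hc'
    exact prod_eq_zero hc (by rw [cycleWeight, if_neg hc'.2, if_neg hc'.1])

end ArcSets

section Words

variable {V : Type*} {n : ℕ}

theorem finRotate_pow_apply (k i : Fin n) : (finRotate n ^ (k : ℕ)) i = i + k := by
  rw [← Perm.iterate_eq_pow, ← finCycle_eq_finRotate_iterate, finCycle_apply]

theorem isSingleOrbit_finRotate : IsSingleOrbit (finRotate n) := fun a b => by
  cases n with
  | zero => exact a.elim0
  | succ m => exact ⟨(b - a : Fin (m + 1)), by rw [finRotate_pow_apply, add_sub_cancel]⟩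

theorem val_finRotate_of_lt {i : Fin n} (h : (i : ℕ) + 1 < n) : (finRotate n i : ℕ) = i + 1 := by
  cases n with
  | zero => exact i.elim0
  | succ m => rw [coe_finRotate, if_neg (Fin.ne_of_val_ne (by simp; omega))]

theorem val_finRotate_of_add_one_eq {i : Fin n} (h : (i : ℕ) + 1 = n) :
    (finRotate n i : ℕ) = 0 := by
  cases n with
  | zero => exact i.elim0
  | succ m => rw [coe_finRotate, if_pos (Fin.ext (by simp; omega))]

/-- The word `g`, read cyclically: each letter is sent to the next one, the last to the first. -/
def wordCycle (g : Fin n ≃ V) : Perm V := g.permCongr (finRotate n)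

@[simp] theorem wordCycle_apply_apply (g : Fin n ≃ V) (i : Fin n) :
    wordCycle g (g i) = g (finRotate n i) := by
  simp [wordCycle]

theorem wordCycle_apply_of_lt (g : Fin n ≃ V) {i : Fin n} (h : (i : ℕ) + 1 < n) :
    wordCycle g (g i) = g ⟨i + 1, h⟩ := by
  rw [wordCycle_apply_apply, show finRotate n i = ⟨i + 1, h⟩ from Fin.ext (val_finRotate_of_lt h)]

theorem wordCycle_pow_apply_apply (g : Fin n ≃ V) (k : ℕ) (i : Fin n) :
    (wordCycle g ^ k) (g i) = g ((finRotate n ^ k) i) := by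
  induction k with
  | zero => rfl
  | succ k ih =>
    rw [pow_succ', Perm.mul_apply, ih, wordCycle_apply_apply, pow_succ', Perm.mul_apply]

theorem isSingleOrbit_wordCycle (g : Fin n ≃ V) : IsSingleOrbit (wordCycle g) := fun a b => by
  obtain ⟨k, hk⟩ := isSingleOrbit_finRotate (g.symm a) (g.symm b)
  exact ⟨k, by simpa [hk] using wordCycle_pow_apply_apply g k (g.symm a)⟩

theorem IsSingleOrbit.minimalPeriod_eq [Fintype V] {σ : Perm V} (hσ : IsSingleOrbit σ) (h : V) :
    minimalPeriod σ h = Fintype.card V := by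
  classical
  have horbit : MulAction.orbit (Subgroup.zpowers σ) h = Set.univ :=
    Set.eq_univ_of_forall fun b =>
      let ⟨k, hk⟩ := hσ h b
      ⟨⟨σ ^ k, Subgroup.npow_mem_zpowers σ k⟩, hk⟩
  have := MulAction.minimalPeriod_eq_card (a := σ) (b := h)
  simp only [Perm.smul_def] at this
  rw [this, Fintype.card_congr (Equiv.setCongr horbit), Fintype.card_congr (Equiv.Set.univ V)]

section OrbitWord

variable [Fintype V] {σ : Perm V} (hσ : IsSingleOrbit σ) (hV : Fintype.card V = n)

noncomputable def orbitWord (h : V) : Fin n ≃ V :=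
  Equiv.ofBijective (fun i => (σ ^ (i : ℕ)) h) <| (Fintype.bijective_iff_injective_and_card _).mpr
    ⟨fun i j hij => Fin.ext <| iterate_injOn_Iio_minimalPeriod
      (by rw [Set.mem_Iio, hσ.minimalPeriod_eq, hV]; exact i.2)
      (by rw [Set.mem_Iio, hσ.minimalPeriod_eq, hV]; exact j.2)
      (by simpa only [Perm.iterate_eq_pow] using hij), by simp [hV]⟩

theorem orbitWord_apply (h : V) (i : Fin n) : orbitWord hσ hV h i = (σ ^ (i : ℕ)) h := rfl

theorem wordCycle_orbitWord (h : V) : wordCycle (orbitWord hσ hV h) = σ := by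
  ext x
  obtain ⟨i, rfl⟩ := (orbitWord hσ hV h).surjective x
  rw [wordCycle_apply_apply, orbitWord_apply, orbitWord_apply]
  by_cases hi : (i : ℕ) + 1 < n
  · rw [val_finRotate_of_lt hi, pow_succ', Perm.mul_apply]
  · have hi : (i : ℕ) + 1 = n := by omega
    rw [val_finRotate_of_add_one_eq hi, ← Perm.mul_apply, ← pow_succ', hi, pow_zero, ← hV,
      ← hσ.minimalPeriod_eq h, ← Perm.iterate_eq_pow, iterate_minimalPeriod, Perm.one_apply]

end OrbitWord

theorem orbitWord_wordCycle [Fintype V] (g : Fin n ≃ V) (hn : 0 < n) :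
    orbitWord (isSingleOrbit_wordCycle g) (by simp [← Fintype.card_congr g]) (g ⟨0, hn⟩) = g := by
  ext i
  rw [orbitWord_apply, wordCycle_pow_apply_apply, finRotate_pow_apply]
  cases n with
  | zero => exact i.elim0
  | succ m => simp

end Words

section Counting

variable {V : Type*} [Fintype V] [DecidableEq V] {n : ℕ} {M : Finset V} {s : V → V}

omit [DecidableEq V] in
theorem card_lt_card_of_rank [Nonempty V] {f : V → ℕ} (hf : ∀ x ∈ M, f (s x) < f x) :
    #M < Fintype.card V := by
  obtain ⟨y, -, hy⟩ := exists_min_image univ f univ_nonempty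
  exact card_lt_univ_of_notMem fun hyM => (hf y hyM).not_ge (hy _ (mem_univ _))

def wordsThrough (n : ℕ) (M : Finset V) (s : V → V) : Finset (Fin n ≃ V) :=
  univ.filter fun g => ∀ x ∈ M, (g.symm x : ℕ) + 1 < n ∧ wordCycle g x = s x

def permsThrough (M : Finset V) (s : V → V) : Finset (Perm V) :=
  univ.filter fun τ => ∀ x ∈ M, τ x = s x

theorem orbitWord_mem_wordsThrough {σ : Perm V} (hσ : IsSingleOrbit σ) (hV : Fintype.card V = n)
    (hext : Set.EqOn σ s M) {h : V} (hh : h ∉ M.image s) :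
    orbitWord hσ hV h ∈ wordsThrough n M s := by
  refine mem_filter.mpr ⟨mem_univ _, fun x hx => ⟨?_, ?_⟩⟩
  · by_contra hlast
    set w := orbitWord hσ hV h
    have hw : wordCycle w = σ := wordCycle_orbitWord hσ hV h
    obtain ⟨i, rfl⟩ := w.surjective x
    have hrot : finRotate n i = ⟨0, by omega⟩ :=
      Fin.ext (val_finRotate_of_add_one_eq (by simp at hlast; omega))
    have hw0 : w ⟨0, by omega⟩ = h := by simp [w, orbitWord_apply]
    have := wordCycle_apply_apply w i
    rw [hw, hext hx, hrot, hw0] at this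
    exact hh (this ▸ mem_image_of_mem s hx)
  · rw [wordCycle_orbitWord, hext hx]

theorem apply_zero_notMem_image {g : Fin n ≃ V} (hg : g ∈ wordsThrough n M s) (hn : 0 < n) :
    g ⟨0, hn⟩ ∉ M.image s := by
  intro h0
  obtain ⟨y, hyM, hy⟩ := mem_image.mp h0
  obtain ⟨hlt, hcyc⟩ := (mem_filter.mp hg).2 y hyM
  rw [hy, ← g.apply_symm_apply y, wordCycle_apply_apply, g.injective.eq_iff] at hcyc
  have := congrArg Fin.val hcyc
  rw [val_finRotate_of_lt hlt] at this
  exact Nat.succ_ne_zero _ this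

theorem card_wordsThrough (hV : Fintype.card V = n) (hn : 0 < n) (hinj : Set.InjOn s M)
    {f : V → ℕ} (hf : ∀ x ∈ M, f (s x) < f x) : #(wordsThrough n M s) = (n - #M)! := by
  let e : {g // g ∈ wordsThrough n M s} ≃
      {σ : Perm V // Set.EqOn σ s M ∧ IsSingleOrbit σ} × {h // h ∉ M.image s} :=
    { toFun g := (⟨wordCycle g.1, fun _ hx => ((mem_filter.mp g.2).2 _ hx).2,
        isSingleOrbit_wordCycle g.1⟩, ⟨g.1 ⟨0, hn⟩, apply_zero_notMem_image g.2 hn⟩)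
      invFun p := ⟨orbitWord p.1.2.2 hV p.2, orbitWord_mem_wordsThrough p.1.2.2 hV p.1.2.1 p.2.2⟩
      left_inv g := Subtype.ext (orbitWord_wordCycle g.1 hn)
      right_inv p := Prod.ext (Subtype.ext (wordCycle_orbitWord p.1.2.2 hV p.2))
        (Subtype.ext (by simp [orbitWord_apply])) }
  have : Nonempty V := Fintype.card_pos_iff.mp (hV ▸ hn)
  have hlt := card_lt_card_of_rank hf
  rw [← Nat.card_eq_finsetCard, Nat.card_congr e, Nat.card_prod, card_isSingleOrbit_eqOn hinj hf,
    Nat.card_eq_fintype_card, Fintype.card_subtype_compl, Fintype.card_coe,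
    card_image_of_injOn hinj, hV, mul_comm, Nat.mul_factorial_pred (by omega)]

theorem card_permsThrough (hinj : Set.InjOn s M) :
    #(permsThrough M s) = (Fintype.card V - #M)! := by
  obtain ⟨e, he⟩ := exists_equiv_extend_of_card_eq (t := univ) (card_univ.symm)
    (subset_univ _) hinj
  set τ₀ : Perm V := e.trans (Equiv.subtypeUnivEquiv mem_univ)
  have hτ₀ : ∀ x ∈ M, τ₀ x = s x := he
  let e' : {τ // τ ∈ permsThrough M s} ≃ {ρ : Perm V // ∀ x, ¬ (x ∉ M) → ρ x = x} :=
    (Equiv.mulLeft τ₀⁻¹).subtypeEquiv fun τ => by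
      simp only [permsThrough, mem_filter, mem_univ, true_and, not_not, Equiv.coe_mulLeft,
        Perm.mul_apply, Perm.inv_eq_iff_eq]
      exact forall₂_congr fun x hx => by rw [hτ₀ x hx, eq_comm]
  rw [← Nat.card_eq_finsetCard, Nat.card_congr (e'.trans (Perm.subtypeEquivSubtypePerm _).symm),
    Nat.card_eq_fintype_card, Fintype.card_perm, Fintype.card_subtype_compl, Fintype.card_coe]

end Counting

section Regrouping

variable {V : Type*} [Fintype V] [DecidableEq V] (R : V → V → Prop) {n : ℕ}

/-- The successor map of vertex-disjoint paths with arcs in `R`, given on `M` and normalised to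
the identity off `M`. -/
structure IsPathSystem (M : Finset V) (s : V → V) : Prop where
  injOn : Set.InjOn s M
  exists_rank : ∃ f : V → ℕ, ∀ x ∈ M, f (s x) < f x
  rel : ∀ x ∈ M, R x (s x)
  apply_of_notMem : ∀ x ∉ M, s x = x

open Classical in
noncomputable def pathSystems : Finset (Finset V × (V → V)) :=
  univ.filter fun p => IsPathSystem R p.1 p.2

open Classical in
/-- The descents of the word `g`, recorded by their first letter rather than their position. -/
noncomputable def descentLetters (g : Fin n ≃ V) : Finset V :=
  univ.filter fun x => (g.symm x : ℕ) + 1 < n ∧ R x (wordCycle g x)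

variable {R}

omit [DecidableEq V] in
theorem mem_descentLetters {g : Fin n ≃ V} {x : V} :
    x ∈ descentLetters R g ↔ (g.symm x : ℕ) + 1 < n ∧ R x (wordCycle g x) := by
  simp [descentLetters]

theorem mem_pathSystems {p : Finset V × (V → V)} : p ∈ pathSystems R ↔ IsPathSystem R p.1 p.2 := by
  simp [pathSystems]

omit [Fintype V] in
theorem IsPathSystem.piecewise_eq {M : Finset V} {s : V → V} (hM : IsPathSystem R M s)
    {σ : V → V} (hσ : ∀ x ∈ M, σ x = s x) : M.piecewise σ id = s := by
  ext x
  by_cases hx : x ∈ M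
  · rw [piecewise_eq_of_mem _ _ _ hx, hσ x hx]
  · rw [piecewise_eq_of_notMem _ _ _ hx, hM.apply_of_notMem x hx, id]

theorem isPathSystem_of_subset_descentLetters {g : Fin n ≃ V} {T : Finset V}
    (hT : T ⊆ descentLetters R g) : IsPathSystem R T (T.piecewise (wordCycle g) id) := by
  have hlt : ∀ x ∈ T, (g.symm x : ℕ) + 1 < n := fun x hx => (mem_descentLetters.mp (hT hx)).1
  refine ⟨?_, ⟨fun x => n - g.symm x, fun x hx => ?_⟩, fun x hx => ?_, fun x hx => ?_⟩
  · exact fun x hx y hy hxy => (wordCycle g).injective <| by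
      rwa [piecewise_eq_of_mem _ _ _ hx, piecewise_eq_of_mem _ _ _ hy] at hxy
  · obtain ⟨i, rfl⟩ := g.surjective x
    have := hlt _ hx
    rw [symm_apply_apply] at this
    simp only [piecewise_eq_of_mem _ _ _ hx, wordCycle_apply_apply, symm_apply_apply,
      val_finRotate_of_lt this]
    omega
  · rw [piecewise_eq_of_mem _ _ _ hx]
    exact (mem_descentLetters.mp (hT hx)).2
  · rw [piecewise_eq_of_notMem _ _ _ hx, id]

theorem sum_descentLetters_eq_sum_pathSystems :
    ∑ g : Fin n ≃ V, ∑ T ∈ (descentLetters R g).powerset, (-1 : ℤ) ^ #T =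
      ∑ p ∈ pathSystems R, ∑ _g ∈ wordsThrough n p.1 p.2, (-1 : ℤ) ^ #p.1 := by
  rw [sum_sigma', sum_sigma']
  refine sum_nbij' (fun q => ⟨(q.2, q.2.piecewise (wordCycle q.1) id), q.1⟩) (fun q => ⟨q.2, q.1.1⟩)
    (fun q hq => ?_) (fun q hq => ?_) (fun q _ => rfl) (fun q hq => ?_) (fun q _ => rfl)
  · have hT := mem_powerset.mp (mem_sigma.mp hq).2
    refine mem_sigma.mpr ⟨mem_pathSystems.mpr (isPathSystem_of_subset_descentLetters hT),
      mem_filter.mpr ⟨mem_univ _, fun x hx => ⟨(mem_descentLetters.mp (hT hx)).1, ?_⟩⟩⟩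
    dsimp only at hx ⊢
    rw [piecewise_eq_of_mem _ _ _ hx]
  · obtain ⟨hp, hg⟩ := mem_sigma.mp hq
    have hM := mem_pathSystems.mp hp
    refine mem_sigma.mpr ⟨mem_univ _, mem_powerset.mpr fun x hx => ?_⟩
    obtain ⟨hlt, hcyc⟩ := (mem_filter.mp hg).2 x hx
    exact mem_descentLetters.mpr ⟨hlt, hcyc ▸ hM.rel x hx⟩
  · obtain ⟨hp, hg⟩ := mem_sigma.mp hq
    have := (mem_pathSystems.mp hp).piecewise_eq fun x hx => ((mem_filter.mp hg).2 x hx).2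
    simp only [this]

theorem isPathSystem_of_mem_acyclicArcSets {τ : Perm V} {M : Finset V}
    (hM : M ∈ acyclicArcSets R τ) : IsPathSystem R M (M.piecewise τ id) := by
  classical
  obtain ⟨hR, horb⟩ := mem_acyclicArcSets.mp hM
  refine ⟨fun x hx y hy hxy => τ.injective ?_, ⟨fun x => Nat.find (horb x), fun x hx => ?_⟩,
    fun x hx => ?_, fun x hx => ?_⟩
  · rwa [piecewise_eq_of_mem _ _ _ hx, piecewise_eq_of_mem _ _ _ hy] at hxy
  · rw [piecewise_eq_of_mem _ _ _ hx]
    have hpos : 0 < Nat.find (horb x) := Nat.pos_of_ne_zero fun h0 => by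
      have := Nat.find_spec (horb x)
      rw [h0] at this
      exact this hx
    refine (Nat.find_min' _ ?_).trans_lt (Nat.sub_lt hpos one_pos)
    beta_reduce
    rw [← Perm.mul_apply, ← pow_succ, Nat.sub_one_add_one hpos.ne']
    exact Nat.find_spec (horb x)
  · rw [piecewise_eq_of_mem _ _ _ hx]
    exact hR x hx
  · rw [piecewise_eq_of_notMem _ _ _ hx, id]

omit [Fintype V] in
theorem exists_pow_apply_notMem {τ : Perm V} {M : Finset V} {f : V → ℕ}
    (hf : ∀ x ∈ M, f (τ x) < f x) (x : V) : ∃ k : ℕ, (τ ^ k) x ∉ M := by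
  induction hfx : f x using Nat.strong_induction_on generalizing x with
  | _ m ih =>
    by_cases hx : x ∈ M
    · obtain ⟨k, hk⟩ := ih _ (hfx ▸ hf x hx) (τ x) rfl
      exact ⟨k + 1, by rwa [pow_succ, Perm.mul_apply]⟩
    · exact ⟨0, hx⟩

theorem sum_acyclicArcSets_eq_sum_pathSystems :
    ∑ τ : Perm V, ∑ M ∈ acyclicArcSets R τ, (-1 : ℤ) ^ #M =
      ∑ p ∈ pathSystems R, ∑ _τ ∈ permsThrough p.1 p.2, (-1 : ℤ) ^ #p.1 := by
  rw [sum_sigma', sum_sigma']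
  refine sum_nbij' (fun q => ⟨(q.2, q.2.piecewise q.1 id), q.1⟩) (fun q => ⟨q.2, q.1.1⟩)
    (fun q hq => ?_) (fun q hq => ?_) (fun q _ => rfl) (fun q hq => ?_) (fun q _ => rfl)
  · have hM := (mem_sigma.mp hq).2
    exact mem_sigma.mpr ⟨mem_pathSystems.mpr (isPathSystem_of_mem_acyclicArcSets hM),
      mem_filter.mpr ⟨mem_univ _, fun x hx => (piecewise_eq_of_mem _ _ _ hx).symm⟩⟩
  · obtain ⟨hp, hτ⟩ := mem_sigma.mp hq
    have hM := mem_pathSystems.mp hp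
    have hτ : ∀ x ∈ q.1.1, q.2 x = q.1.2 x := (mem_filter.mp hτ).2
    obtain ⟨f, hf⟩ := hM.exists_rank
    refine mem_sigma.mpr ⟨mem_univ _, mem_acyclicArcSets.mpr ⟨fun x hx => ?_,
      exists_pow_apply_notMem (f := f) fun x hx => ?_⟩⟩
    · rw [hτ x hx]; exact hM.rel x hx
    · rw [hτ x hx]; exact hf x hx
  · obtain ⟨hp, hτ⟩ := mem_sigma.mp hq
    have := (mem_pathSystems.mp hp).piecewise_eq (mem_filter.mp hτ).2
    simp only [this]

end Regrouping

section Main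

variable {V : Type*} [Fintype V] [DecidableEq V] (R : V → V → Prop) {n : ℕ}

theorem card_descentLetters_eq_empty (hV : Fintype.card V = n) (hn : 0 < n) :
    (#(univ.filter fun g : Fin n ≃ V => descentLetters R g = ∅) : ℤ) =
      ∑ τ : Perm V, ∏ c ∈ τ.cycleFactorsFinset, cycleWeight R c := by
  calc (#(univ.filter fun g : Fin n ≃ V => descentLetters R g = ∅) : ℤ)
      = ∑ g : Fin n ≃ V, ∑ T ∈ (descentLetters R g).powerset, (-1 : ℤ) ^ #T := by
        rw [sum_congr rfl fun g _ => sum_powerset_neg_one_pow_card, sum_boole]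
    _ = ∑ p ∈ pathSystems R, ∑ _g ∈ wordsThrough n p.1 p.2, (-1 : ℤ) ^ #p.1 :=
        sum_descentLetters_eq_sum_pathSystems
    _ = ∑ p ∈ pathSystems R, ∑ _τ ∈ permsThrough p.1 p.2, (-1 : ℤ) ^ #p.1 := by
        refine sum_congr rfl fun p hp => ?_
        obtain ⟨hinj, ⟨f, hf⟩, -, -⟩ := mem_pathSystems.mp hp
        rw [sum_const, sum_const, card_wordsThrough hV hn hinj hf, card_permsThrough hinj, hV]
    _ = ∑ τ : Perm V, ∑ M ∈ acyclicArcSets R τ, (-1 : ℤ) ^ #M :=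
        sum_acyclicArcSets_eq_sum_pathSystems.symm
    _ = ∑ τ : Perm V, ∏ c ∈ τ.cycleFactorsFinset, cycleWeight R c :=
        sum_congr rfl fun τ _ => sum_acyclicArcSets_eq_prod_cycleWeight τ

end Main

section Labels

variable (X : Set (ℕ × ℕ)) {n : ℕ}

/-- The arcs of the complement `D̄` of `G_n(X)`, on `Fin n` with vertex `x` labelled `x + 1`. -/
def labelRel (x y : Fin n) : Prop := ((x : ℕ) + 1, (y : ℕ) + 1) ∈ X

variable {X}

theorem val_add_one_ne_of_mem_support {c : Perm (Fin n)} {x : Fin n} (hx : x ∈ c.support) :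
    (x : ℕ) + 1 ≠ (c x : ℕ) + 1 := by
  simpa [Fin.ext_iff, eq_comm] using Perm.mem_support.mp hx

theorem isGcycle_iff {c : Perm (Fin n)} :
    isGcycle X c ↔ ∀ x ∈ c.support, ¬ labelRel X x (c x) :=
  forall₂_congr fun _ hx => and_iff_right (val_add_one_ne_of_mem_support hx)

theorem isGbarCycle_iff {c : Perm (Fin n)} :
    isGbarCycle X c ↔ ∀ x ∈ c.support, labelRel X x (c x) :=
  forall₂_congr fun _ hx => and_iff_right (val_add_one_ne_of_mem_support hx)

/-- The one-line notation of a permutation of `[n]`. -/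
def wordList (g : Perm (Fin n)) : List ℕ := List.ofFn fun i => (g i : ℕ) + 1

theorem getD_wordList (g : Perm (Fin n)) {j : ℕ} (hj : j < n) :
    (wordList g).getD j 0 = g ⟨j, hj⟩ + 1 := by
  simp [wordList, hj]

theorem nodup_wordList (g : Perm (Fin n)) : (wordList g).Nodup :=
  List.nodup_ofFn.mpr fun i j h => g.injective (Fin.ext (by simpa using h))

theorem toFinset_wordList (g : Perm (Fin n)) : (wordList g).toFinset = Icc 1 n := by
  ext a
  simp only [wordList, List.mem_toFinset, List.mem_ofFn, mem_Icc]
  constructor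
  · rintro ⟨i, rfl⟩
    have := (g i).2
    omega
  · rintro ⟨h1, h2⟩
    exact ⟨g.symm ⟨a - 1, by omega⟩, by simp; omega⟩

theorem wordList_injective : Injective (wordList (n := n)) := fun g h hgh =>
  Equiv.ext fun i => Fin.ext (by simpa using congrFun (List.ofFn_injective hgh) i)

theorem exists_wordList_eq {w : List ℕ} (hw : w.Nodup) (hS : w.toFinset = Icc 1 n) :
    ∃ g : Perm (Fin n), wordList g = w := by
  have hlen : w.length = n := by
    rw [← List.toFinset_card_of_nodup hw, hS, Nat.card_Icc, Nat.add_sub_cancel]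
  have hmem : ∀ (i : ℕ) (hi : i < w.length), 1 ≤ w[i] ∧ w[i] ≤ n := fun i hi =>
    mem_Icc.mp (hS ▸ List.mem_toFinset.mpr (List.getElem_mem hi))
  let f : Fin n → Fin n := fun i => ⟨w[(i : ℕ)] - 1, by have := hmem i (by omega); omega⟩
  have hf : Injective f := fun i j hij => by
    have hi := hmem i (by omega)
    have hj := hmem j (by omega)
    have : w[(i : ℕ)] = w[(j : ℕ)] := by simp only [f, Fin.mk.injEq] at hij; omega
    exact Fin.ext ((hw.getElem_inj_iff).mp this)
  refine ⟨Equiv.ofBijective f (Finite.injective_iff_bijective.mp hf), List.ext_getElem ?_ ?_⟩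
  · simp [wordList, hlen]
  · intro i hi _
    have := hmem i (by omega)
    simp [wordList, f]
    omega

open Classical in
theorem xDes_wordList_eq_empty_iff (g : Perm (Fin n)) :
    XDes X (wordList g) = ∅ ↔ descentLetters (labelRel X) g = ∅ := by
  have hlen : (wordList g).length = n := List.length_ofFn
  rw [XDes, hlen, filter_eq_empty_iff, eq_empty_iff_forall_notMem]
  simp only [mem_Icc, mem_descentLetters, labelRel, not_and, and_imp]
  constructor
  · intro h x hlt hR
    obtain ⟨i, rfl⟩ := g.surjective x
    rw [symm_apply_apply] at hlt
    rw [wordCycle_apply_of_lt g hlt] at hR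
    refine h (x := i + 1) (by omega) (by omega) ?_
    rwa [Nat.add_sub_cancel, getD_wordList g i.2, getD_wordList g hlt]
  · intro h i h1 h2 hX
    have hlt : i - 1 + 1 < n := by omega
    refine h (g ⟨i - 1, by omega⟩) (by simpa using hlt) ?_
    rw [wordCycle_apply_of_lt g hlt]
    rw [getD_wordList g (by omega), getD_wordList g (by omega)] at hX
    simpa [Nat.sub_add_cancel h1] using hX

open Classical in
theorem dXn_empty_eq_card :
    dXn X ∅ n = #(univ.filter fun g : Perm (Fin n) => descentLetters (labelRel X) g = ∅) := by
  let e : {g : Perm (Fin n) // descentLetters (labelRel X) g = ∅} →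
      {w : List ℕ // w.Nodup ∧ w.toFinset = Icc 1 n ∧ XDes X w = ∅} := fun g =>
    ⟨wordList g.1, nodup_wordList g.1, toFinset_wordList g.1,
      (xDes_wordList_eq_empty_iff g.1).mpr g.2⟩
  have he : Bijective e := by
    refine ⟨fun g h hgh => Subtype.ext (wordList_injective (congrArg Subtype.val hgh)), ?_⟩
    rintro ⟨w, hw, hS, hX⟩
    obtain ⟨g, rfl⟩ := exists_wordList_eq hw hS
    exact ⟨⟨g, (xDes_wordList_eq_empty_iff g).mp hX⟩, rfl⟩
  rw [dXn, dX, ← Nat.card_congr (Equiv.ofBijective e he), Nat.card_eq_fintype_card,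
    Fintype.card_subtype]

end Labels

end GrinbergStanley

open GrinbergStanley Finset

open Classical in
/-- Grinberg–Stanley, general digraphs. With `D = G_n(X)` and its
complement `D̄`:
`d_X(∅;n) = Σ_{σ ∈ 𝔖_{[n]}(D,D̄)} (−1)^{φ(σ)}`, where `𝔖_{[n]}(D,D̄)` consists of the
permutations of `[n]` each of whose nontrivial cycles is a `D`-cycle or a `D̄`-cycle, and
`φ(σ) = Σ (|γ| − 1)` over the nontrivial cycles `γ` of `σ` that are `D̄`-cycles. -/
theorem stmt10 (X : Set (ℕ × ℕ)) (n : ℕ) (hn : 1 ≤ n) :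
    (dXn X ∅ n : ℤ) =
      ∑ σ ∈ Finset.univ.filter (fun σ : Equiv.Perm (Fin n) =>
          ∀ c ∈ σ.cycleFactorsFinset, isGcycle X c ∨ isGbarCycle X c),
        (-1 : ℤ) ^ (∑ c ∈ σ.cycleFactorsFinset.filter (fun c => isGbarCycle X c),
          (c.support.card - 1)) := by
  rw [dXn_empty_eq_card, card_descentLetters_eq_empty (labelRel X) (Fintype.card_fin n) hn,
    sum_filter]
  refine sum_congr rfl fun σ _ => ?_
  rw [prod_cycleWeight]
  simp only [isGcycle_iff, isGbarCycle_iff]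
  congr
end

section
/- Let m ≥ 1 and suppose X ⊆ ℕ² is periodic modulo m with indicator f : (ℤ/mℤ)² → {0,1} (i.e. for distinct a,b ∈ ℕ, (a,b) ∈ X iff f(a mod m, b mod m) = 1). Let H be the digraph on ℤ/mℤ with edge r → s iff f(r,s) = 0. For n ≥ 1 write ℓ_r(n) = |{t ∈ [n] : t ≡ r mod m}|, and let A_H(ℓ₀,…,ℓ_{m−1}) be the number of words w₁⋯w_n over ℤ/mℤ with |{i : w_i = r}| = ℓ_r for all r and with w_i → w_{i+1} an edge of H for all i ∈ [n-1]. Then d_X(∅;n) = A_H(ℓ₀(n),…,ℓ_{m−1}(n)) · Π_{r ∈ ℤ/mℤ} ℓ_r(n)!. -/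
theorem Nat.card_subtype_eq_mul_of_fiberEquiv {α β T : Type*} (f : α → β)
    {p : α → Prop} {q : β → Prop} (hpq : ∀ x, p x → q (f x))
    (e : ∀ y, q y → {x // p x ∧ f x = y} ≃ T) :
    Nat.card {x // p x} = Nat.card {y // q y} * Nat.card T := by
  let g : {x // p x} → {y // q y} := fun x => ⟨f x, hpq x x.2⟩
  have fiber (y : {y // q y}) : {x // g x = y} ≃ T :=
    ((Equiv.subtypeEquivRight fun x => Subtype.ext_iff).trans
      (Equiv.subtypeSubtypeEquivSubtypeInter p (fun x => f x = y))).trans (e y y.2)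
  rw [← Nat.card_prod, Nat.card_congr ((Equiv.sigmaFiberEquiv g).symm.trans
    (Equiv.sigmaEquivProdOfEquiv fiber))]

namespace List

variable {α β : Type*}

theorem card_nodup_toFinset_eq [DecidableEq α] (S : Finset α) :
    Nat.card {l : List α // l.Nodup ∧ l.toFinset = S} = S.card.factorial := by
  have e : {l : List α // l.Nodup ∧ l.toFinset = S} ≃ {l // l ∈ S.toList.permutations.toFinset} :=
    Equiv.subtypeEquivRight fun l => by
      rw [mem_toFinset, mem_permutations, ← Multiset.coe_eq_coe, Finset.coe_toList]
      refine ⟨fun ⟨hl, hS⟩ => by rw [← hS, toFinset_val, hl.dedup], fun h => ?_⟩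
      have hl : l.Nodup := Multiset.coe_nodup.mp (h ▸ S.nodup)
      exact ⟨hl, by rw [← Finset.val_inj, toFinset_val, hl.dedup, h]⟩
  rw [Nat.card_congr e, Nat.card_eq_fintype_card, Fintype.card_coe,
    toFinset_card_of_nodup (nodup_permutations _ S.nodup_toList), length_permutations,
    Finset.length_toList]

theorem isChain_iff_forall_getD (R : α → α → Prop) (l : List α) (d : α) :
    l.IsChain R ↔ ∀ i ∈ Finset.Icc 1 (l.length - 1), R (l.getD (i - 1) d) (l.getD i d) := by
  rw [isChain_iff_getElem]
  constructor
  · intro h i hi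
    obtain ⟨j, rfl⟩ : ∃ j, i = j + 1 := ⟨i - 1, by grind⟩
    rw [Nat.add_sub_cancel, getD_eq_getElem _ _ (by grind), getD_eq_getElem _ _ (by grind)]
    exact h j (by grind)
  · intro h i hi
    have := h (i + 1) (by simp; omega)
    rwa [Nat.add_sub_cancel, getD_eq_getElem _ _ (by omega), getD_eq_getElem _ _ hi] at this

theorem Nodup.isChain_iff_isChain_map {l : List α} (hl : l.Nodup) (c : α → β)
    {R : α → α → Prop} {R' : β → β → Prop} (h : ∀ a b, a ≠ b → (R a b ↔ R' (c a) (c b))) :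
    l.IsChain R ↔ (l.map c).IsChain R' := by
  rw [isChain_map, isChain_iff_getElem, isChain_iff_getElem]
  refine forall₂_congr fun i hi => h _ _ fun heq => ?_
  have := hl.getElem_inj_iff.mp heq
  omega

variable [DecidableEq β] (c : α → β)

/-- Inverse to splitting a word into its colour classes: the `i`-th letter is the next unused
letter of `g (v i)`. -/
def mergeAlong : List β → (β → List α) → List α
  | [], _ => []
  | r :: v, g => (g r).take 1 ++ mergeAlong v (Function.update g r (g r).tail)

def MatchesPattern (v : List β) (g : β → List α) : Prop :=
  ∀ r, (g r).map c = replicate (v.count r) r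

variable {c}

theorem MatchesPattern.exists_cons {r : β} {v : List β} {g : β → List α}
    (hg : MatchesPattern c (r :: v) g) :
    ∃ a t, g r = a :: t ∧ c a = r ∧ MatchesPattern c v (Function.update g r t) := by
  obtain ⟨a, t, hrt⟩ : ∃ a t, g r = a :: t := by
    have := congrArg length (hg r)
    rw [length_map, length_replicate, count_cons_self] at this
    exact exists_cons_of_length_eq_add_one this
  refine ⟨a, t, hrt, ?_, fun s => ?_⟩
  · have := hg r
    rw [hrt, count_cons_self, replicate_succ, map_cons] at this
    exact (cons_eq_cons.mp this).1
  · have := hg s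
    by_cases hs : s = r
    · subst hs
      rw [hrt, count_cons_self, replicate_succ, map_cons] at this
      simpa using (cons_eq_cons.mp this).2
    · rwa [count_cons_of_ne (Ne.symm hs), ← Function.update_of_ne hs t g] at this

theorem mergeAlong_map_filter (w : List α) :
    mergeAlong (w.map c) (fun r => w.filter (c · = r)) = w := by
  induction w with
  | nil => rfl
  | cons a w ih =>
    have : Function.update (fun r => (a :: w).filter (c · = r)) (c a)
        ((a :: w).filter (c · = c a)).tail = fun r => w.filter (c · = r) := by
      funext r
      by_cases hr : r = c a
      · subst hr; simp
      · simp [Function.update_of_ne hr, filter_cons, Ne.symm hr]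
    rw [map_cons, mergeAlong, this, ih]
    simp

theorem map_mergeAlong {v : List β} {g : β → List α} (hg : MatchesPattern c v g) :
    (mergeAlong v g).map c = v := by
  induction v generalizing g with
  | nil => rfl
  | cons r v ih =>
    obtain ⟨a, t, hrt, hca, hg'⟩ := hg.exists_cons
    simp [mergeAlong, hrt, ih hg', hca]

theorem filter_mergeAlong {v : List β} {g : β → List α} (hg : MatchesPattern c v g) (r : β) :
    (mergeAlong v g).filter (c · = r) = g r := by
  induction v generalizing g with
  | nil => simpa [mergeAlong, eq_comm] using hg r
  | cons s v ih =>
    obtain ⟨a, t, hst, hca, hg'⟩ := hg.exists_cons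
    by_cases hr : s = r
    · subst hr; simp [mergeAlong, hst, hca, ih hg']
    · simp [mergeAlong, hst, hca, ih hg', hr, Function.update_of_ne (Ne.symm hr)]

variable [DecidableEq α]

theorem count_mergeAlong {v : List β} {g : β → List α}
    (hg : MatchesPattern c v g) (x : α) : (mergeAlong v g).count x = (g (c x)).count x := by
  rw [← filter_mergeAlong hg, count_filter (by simp)]

theorem mem_mergeAlong {v : List β} {g : β → List α} (hg : MatchesPattern c v g) (x : α) :
    x ∈ mergeAlong v g ↔ x ∈ g (c x) := by
  rw [← count_pos_iff, ← count_pos_iff, count_mergeAlong hg]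

theorem Nodup.count_map_eq_card_filter {w : List α} (hw : w.Nodup) (c : α → β) (r : β) :
    (w.map c).count r = (w.toFinset.filter (c · = r)).card := by
  have : (w.map c).count r = (w.filter (c · = r)).length := by
    rw [count_eq_countP, countP_map, countP_eq_length_filter]
    rfl
  rw [this, ← toFinset_card_of_nodup (hw.filter _), toFinset_filter]
  simp only [decide_eq_true_eq]

theorem matchesPattern_of_toFinset_eq {S : Finset α} {v : List β}
    (hv : ∀ r, v.count r = (S.filter (c · = r)).card) {g : β → List α}
    (hg : ∀ r, (g r).Nodup ∧ (g r).toFinset = S.filter (c · = r)) : MatchesPattern c v g := by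
  intro r
  rw [eq_replicate_iff, length_map, hv, ← (hg r).2, toFinset_card_of_nodup (hg r).1]
  refine ⟨rfl, ?_⟩
  intro b hb
  obtain ⟨x, hx, rfl⟩ := mem_map.mp hb
  have hxS : x ∈ S.filter (c · = r) := (hg r).2 ▸ mem_toFinset.mpr hx
  exact (Finset.mem_filter.mp hxS).2

variable (c) in
def nodupFiberEquiv (S : Finset α) (v : List β)
    (hv : ∀ r, v.count r = (S.filter (c · = r)).card) :
    {w : List α // w.Nodup ∧ w.toFinset = S ∧ w.map c = v} ≃
      ∀ r, {l : List α // l.Nodup ∧ l.toFinset = S.filter (c · = r)} where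
  toFun w r := ⟨w.1.filter (c · = r), w.2.1.filter _, by
    rw [toFinset_filter, w.2.2.1]
    simp only [decide_eq_true_eq]⟩
  invFun g :=
    have hg := matchesPattern_of_toFinset_eq hv fun r => (g r).2
    ⟨mergeAlong v (fun r => g r),
      nodup_iff_count_le_one.mpr fun x => count_mergeAlong hg x ▸
        nodup_iff_count_le_one.mp (g (c x)).2.1 x,
      Finset.ext fun x => by
        rw [mem_toFinset, mem_mergeAlong hg, ← mem_toFinset, (g (c x)).2.2]
        simp,
      map_mergeAlong hg⟩
  left_inv w := Subtype.ext (by obtain ⟨w, -, -, rfl⟩ := w; exact mergeAlong_map_filter w)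
  right_inv g := funext fun r => Subtype.ext
    (filter_mergeAlong (matchesPattern_of_toFinset_eq hv fun r => (g r).2) r)

theorem card_nodup_isChain_eq [Fintype β] (c : α → β) (S : Finset α) {R : α → α → Prop}
    {R' : β → β → Prop} (hR : ∀ a b, a ≠ b → (R a b ↔ R' (c a) (c b))) :
    Nat.card {w : List α // w.Nodup ∧ w.toFinset = S ∧ w.IsChain R} =
      Nat.card {v : List β // v.length = S.card ∧
          (∀ r, v.count r = (S.filter (c · = r)).card) ∧ v.IsChain R'} *
        ∏ r, (S.filter (c · = r)).card.factorial := by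
  simp only [← card_nodup_toFinset_eq]
  rw [← Nat.card_pi]
  refine Nat.card_subtype_eq_mul_of_fiberEquiv (map c) ?_
    fun v hv => (Equiv.subtypeEquivRight fun w => ?_).trans (nodupFiberEquiv c S v hv.2.1)
  · rintro w ⟨hw, hS, hwR⟩
    refine ⟨by rw [length_map, ← toFinset_card_of_nodup hw, hS], fun r => ?_,
      (hw.isChain_iff_isChain_map c hR).mp hwR⟩
    rw [hw.count_map_eq_card_filter, hS]
  · refine ⟨fun ⟨⟨hw, hS, _⟩, hwv⟩ => ⟨hw, hS, hwv⟩, fun ⟨hw, hS, hwv⟩ => ⟨⟨hw, hS, ?_⟩, hwv⟩⟩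
    rw [hw.isChain_iff_isChain_map c hR, hwv]
    exact hv.2.2

end List

open List

theorem XDes_eq_empty_iff (X : Set (ℕ × ℕ)) (w : List ℕ) :
    XDes X w = ∅ ↔ w.IsChain (fun a b => (a, b) ∉ X) := by
  classical
  rw [XDes, Finset.filter_eq_empty_iff, isChain_iff_forall_getD _ _ 0]

theorem stmt11_general (m : ℕ) [NeZero m] (X : Set (ℕ × ℕ)) (f : ZMod m → ZMod m → Bool)
    (hX : ∀ a b : ℕ, a ≠ b → ((a, b) ∈ X ↔ f (a : ZMod m) (b : ZMod m) = true))
    (n : ℕ) :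
    dXn X ∅ n =
      Nat.card {w : List (ZMod m) // w.length = n ∧
          (∀ r : ZMod m, w.count r = residueCount m n r) ∧
          (∀ i ∈ Finset.Icc 1 (n - 1), f (w.getD (i - 1) 0) (w.getD i 0) = false)} *
        ∏ r : ZMod m, (residueCount m n r).factorial := by
  have words_iff (v : List (ZMod m)) :
      (v.length = n ∧ (∀ r, v.count r = residueCount m n r) ∧
        ∀ i ∈ Finset.Icc 1 (n - 1), f (v.getD (i - 1) 0) (v.getD i 0) = false) ↔
      (v.length = (Finset.Icc 1 n).card ∧ (∀ r, v.count r = residueCount m n r) ∧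
        v.IsChain (fun r s => f r s = false)) := by
    rw [Nat.card_Icc, Nat.add_sub_cancel]
    exact ⟨fun ⟨hv, hc, hf⟩ => ⟨hv, hc, (isChain_iff_forall_getD _ _ 0).mpr (hv ▸ hf)⟩,
      fun ⟨hv, hc, hf⟩ => ⟨hv, hc, hv ▸ (isChain_iff_forall_getD _ _ 0).mp hf⟩⟩
  rw [Nat.card_congr (Equiv.subtypeEquivRight words_iff), dXn, dX]
  simp only [XDes_eq_empty_iff]
  exact card_nodup_isChain_eq (Nat.cast : ℕ → ZMod m) _ fun a b hab => by simp [hX a b hab]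

/-- transfer-matrix core identity. Let `m ≥ 1` and suppose `X` is
periodic modulo `m` with indicator `f`. Let `H` be the digraph on `ℤ/mℤ` with edge `r → s`
iff `f(r,s) = 0`. Then `d_X(∅;n)` equals `A_H(ℓ₀(n),…,ℓ_{m−1}(n))`, the number of words
`w₁⋯w_n` over `ℤ/mℤ` with content `ℓ_r(n)` for each residue `r` whose consecutive
transitions are all edges of `H` (i.e. `f(w_i, w_{i+1}) = 0` for all `i ∈ [n-1]`),
multiplied by `Π_r ℓ_r(n)!`. -/
theorem stmt11 (m : ℕ) [NeZero m] (X : Set (ℕ × ℕ)) (f : ZMod m → ZMod m → Bool)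
    (hX : ∀ a b : ℕ, a ≠ b → ((a, b) ∈ X ↔ f (a : ZMod m) (b : ZMod m) = true))
    (n : ℕ) (hn : 1 ≤ n) :
    dXn X ∅ n =
      Nat.card {w : List (ZMod m) // w.length = n ∧
          (∀ r : ZMod m, w.count r = residueCount m n r) ∧
          (∀ i ∈ Finset.Icc 1 (n - 1), f (w.getD (i - 1) 0) (w.getD i 0) = false)} *
        ∏ r : ZMod m, (residueCount m n r).factorial :=
  stmt11_general m X f hX n
end

section
/- Fix n ≥ 2 and p ∈ (0,1). Let G⃗(n,p) be the random digraph on [n] in which each ordered pair (i,j) with i ≠ j is an edge independently with probability p, and let Y be the number of Hamiltonian paths of G⃗(n,p), i.e. the number of permutations π ∈ 𝔖_n such that (π_i, π_{i+1}) is an edge for every i ∈ [n-1]. Then ℙ(Y ≥ ½ · n! · p^{n−1}) ≥ ¼ · exp(1 − 1/p). -/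
/-!
Writing `Y = ∑_π 1[π is a path]` gives `E Y = n! p^(n-1)` and
`E Y² = ∑_{π,σ} p^|E π ∪ E σ| = p^(2(n-1)) ∑_{π,σ} (1/p)^|E π ∩ E σ|`.
Expanding `(1 + x)^|E π ∩ E σ|` over common edge sets `T`, the number of Hamiltonian paths through a
set `T` of path edges is at most `(n - |T|)!`, since such a path is determined by the order in which
it visits the `n - |T|` paths into which `T` splits the vertices. Hence
`E Y² ≤ (E Y)² e^(1/p - 1)`, and the Paley–Zygmund inequality with `θ = 1/2` concludes.
-/

open MeasureTheory

/-- Directed edges on vertex set `Fin n`: ordered pairs of distinct vertices. -/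
abbrev DEdge (n : ℕ) := {e : Fin n × Fin n // e.1 ≠ e.2}

/-- The `i`-th consecutive directed edge `(π_i, π_{i+1})` (for `1 ≤ i ≤ n-1`) traced out by a
permutation `π` of `Fin n` in one-line notation. -/
def pathEdge (n : ℕ) (π : Equiv.Perm (Fin n)) (i : Fin (n - 1)) : DEdge n :=
  ⟨(π ⟨i.1, by have := i.isLt; omega⟩, π ⟨i.1 + 1, by have := i.isLt; omega⟩), by
    intro h
    have h3 : i.1 = i.1 + 1 := congrArg Fin.val (π.injective h)
    omega⟩

/-- The random digraph `G⃗(n,p)`: the product Bernoulli(`p`) measure on assignments of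
presence/absence to each of the `n(n−1)` possible directed edges on `[n]`. -/
noncomputable def digraphMeasure (n : ℕ) (p : ENNReal) (hp : p ≤ 1) :
    Measure (DEdge n → Bool) :=
  Measure.pi (fun _ => (PMF.bernoulli p.toNNReal (by simpa using ENNReal.toNNReal_mono ENNReal.one_ne_top hp)).toMeasure)

/-- `hamY n ω` is the number of Hamiltonian paths of the digraph `ω`: permutations
`π ∈ 𝔖_n` all of whose consecutive pairs `(π_i, π_{i+1})`, `1 ≤ i ≤ n−1`, are edges. -/
noncomputable def hamY (n : ℕ) (ω : DEdge n → Bool) : ℕ :=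
  (Finset.univ.filter (fun π : Equiv.Perm (Fin n) =>
    ∀ i : Fin (n - 1), ω (pathEdge n π i) = true)).card

open Finset
open scoped ENNReal Nat

section Probability

variable {Ω : Type*} [MeasurableSpace Ω]

lemma sq_lintegral_le_lintegral_sq_mul_measure_univ (ν : Measure Ω) {f : Ω → ℝ≥0∞}
    (hf : AEMeasurable f ν) : (∫⁻ ω, f ω ∂ν) ^ 2 ≤ (∫⁻ ω, f ω ^ 2 ∂ν) * ν Set.univ := by
  have hholder := ENNReal.lintegral_mul_le_Lp_mul_Lq ν Real.HolderConjugate.two_two hf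
    (aemeasurable_const (b := 1))
  have hsq : ∀ x : ℝ≥0∞, (x ^ (1 / 2 : ℝ)) ^ 2 = x := fun x => by
    rw [← ENNReal.rpow_natCast, ← ENNReal.rpow_mul]; norm_num
  simp only [Pi.mul_apply, mul_one, ENNReal.one_rpow, lintegral_const, one_mul] at hholder
  calc (∫⁻ ω, f ω ∂ν) ^ 2
      ≤ ((∫⁻ ω, f ω ^ (2 : ℝ) ∂ν) ^ (1 / 2 : ℝ) * ν Set.univ ^ (1 / 2 : ℝ)) ^ 2 := by
        gcongr
    _ = (∫⁻ ω, f ω ^ 2 ∂ν) * ν Set.univ := by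
        simp only [mul_pow, hsq, ENNReal.rpow_two]

/-- **Paley–Zygmund inequality**: on `{f < θ E[f]}` the function contributes at most `θ E[f]`, and
the rest of `E[f]` is controlled by Cauchy–Schwarz on `{θ E[f] ≤ f}`. -/
theorem paley_zygmund {μ : Measure Ω} [IsProbabilityMeasure μ] {f : Ω → ℝ≥0∞}
    (hf : Measurable f) (hfin : ∫⁻ ω, f ω ∂μ ≠ ∞) (θ : ℝ≥0∞) :
    (1 - θ) ^ 2 * (∫⁻ ω, f ω ∂μ) ^ 2 / ∫⁻ ω, f ω ^ 2 ∂μ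
      ≤ μ {ω | θ * ∫⁻ ω, f ω ∂μ ≤ f ω} := by
  set E := ∫⁻ ω, f ω ∂μ
  set A := {ω | θ * E ≤ f ω}
  have hA : MeasurableSet A := measurableSet_le measurable_const hf
  have hsplit : E ≤ θ * E + ∫⁻ ω in A, f ω ∂μ := by
    calc E ≤ ∫⁻ ω, θ * E + A.indicator f ω ∂μ := by
          refine lintegral_mono fun ω => ?_
          by_cases hω : ω ∈ A
          · simp only [Set.indicator_of_mem hω, le_add_self]
          · simp only [Set.indicator_of_notMem hω, add_zero]
            exact (not_le.mp hω).le
      _ = θ * E + ∫⁻ ω in A, f ω ∂μ := by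
          rw [lintegral_add_left measurable_const, lintegral_const, measure_univ, mul_one,
            lintegral_indicator hA]
  have hmain : (1 - θ) * E ≤ ∫⁻ ω in A, f ω ∂μ := by
    rw [ENNReal.sub_mul fun _ _ => hfin, one_mul]
    exact tsub_le_iff_left.mpr hsplit
  refine ENNReal.div_le_of_le_mul' ?_
  calc (1 - θ) ^ 2 * E ^ 2 = ((1 - θ) * E) ^ 2 := (mul_pow _ _ _).symm
    _ ≤ (∫⁻ ω in A, f ω ∂μ) ^ 2 := by gcongr
    _ ≤ (∫⁻ ω in A, f ω ^ 2 ∂μ) * μ A := by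
        simpa only [Measure.restrict_apply_univ] using
          sq_lintegral_le_lintegral_sq_mul_measure_univ (μ.restrict A) hf.aemeasurable
    _ ≤ (∫⁻ ω, f ω ^ 2 ∂μ) * μ A := by gcongr; exact Measure.restrict_le_self

variable {ι : Type*} [Fintype ι]

lemma lintegral_sum_indicator_one (μ : Measure Ω) {A : ι → Set Ω}
    (hA : ∀ i, MeasurableSet (A i)) :
    ∫⁻ ω, ∑ i, (A i).indicator 1 ω ∂μ = ∑ i, μ (A i) := by
  rw [lintegral_finsetSum _ fun i _ => measurable_one.indicator (hA i)]
  exact sum_congr rfl fun i _ => lintegral_indicator_one (hA i)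

lemma lintegral_sum_indicator_one_sq (μ : Measure Ω) {A : ι → Set Ω}
    (hA : ∀ i, MeasurableSet (A i)) :
    ∫⁻ ω, (∑ i, (A i).indicator 1 ω) ^ 2 ∂μ = ∑ i, ∑ j, μ (A i ∩ A j) := by
  have hprod : ∀ i j ω, (A i).indicator 1 ω * (A j).indicator 1 ω
      = (A i ∩ A j).indicator (1 : Ω → ℝ≥0∞) ω :=
    fun i j ω => by rw [Set.inter_indicator_one, Pi.mul_apply]
  simp_rw [sq, sum_mul_sum, hprod]
  rw [lintegral_finsetSum _ fun i _ => Finset.measurable_sum _ fun j _ =>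
    measurable_one.indicator ((hA i).inter (hA j))]
  exact sum_congr rfl fun i _ => lintegral_sum_indicator_one μ fun j => (hA i).inter (hA j)

lemma measure_pi_bernoulli_forall_eq_true (r : NNReal) (hr : r ≤ 1) (T : Finset ι) :
    Measure.pi (fun _ : ι => (PMF.bernoulli r hr).toMeasure) {ω | ∀ i ∈ T, ω i = true}
      = (r : ℝ≥0∞) ^ #T := by
  classical
  have hset : {ω : ι → Bool | ∀ i ∈ T, ω i = true}
      = Set.univ.pi fun i => if i ∈ T then {true} else Set.univ := by
    ext ω
    simp only [Set.mem_ofPred_eq, Set.mem_pi, Set.mem_univ, true_implies]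
    refine forall_congr' fun i => ?_
    split_ifs with hi <;> simp [hi]
  have hfactor : ∀ i, (PMF.bernoulli r hr).toMeasure (if i ∈ T then {true} else Set.univ)
      = if i ∈ T then (r : ℝ≥0∞) else 1 := fun i => by
    split_ifs
    · rw [PMF.toMeasure_apply_singleton _ _ (measurableSet_singleton _), PMF.bernoulli_apply]
      rfl
    · exact measure_univ
  rw [hset, Measure.pi_pi, prod_congr rfl fun i _ => hfactor i, prod_ite_mem, univ_inter,
    prod_const]

end Probability

namespace HamiltonianPath

variable {n : ℕ}

noncomputable def pathEdges (n : ℕ) (π : Equiv.Perm (Fin n)) : Finset (DEdge n) :=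
  univ.image (pathEdge n π)

lemma pathEdge_injective (π : Equiv.Perm (Fin n)) : Function.Injective (pathEdge n π) :=
  fun i j h => Fin.ext <| by
    simpa using congrArg Fin.val (π.injective (congrArg (fun e => e.1.1) h))

lemma card_pathEdges (π : Equiv.Perm (Fin n)) : #(pathEdges n π) = n - 1 := by
  rw [pathEdges, card_image_of_injective _ (pathEdge_injective π), card_univ, Fintype.card_fin]

lemma mem_pathEdges {π : Equiv.Perm (Fin n)} {e : DEdge n} :
    e ∈ pathEdges n π ↔ (π.symm e.1.2 : ℕ) = π.symm e.1.1 + 1 := by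
  constructor
  · rintro he
    obtain ⟨i, -, rfl⟩ := mem_image.mp he
    simp only [pathEdge, Equiv.symm_apply_apply]
  · intro h
    have hlt : (π.symm e.1.1 : ℕ) < n - 1 := by have := (π.symm e.1.2).isLt; omega
    refine mem_image.mpr ⟨⟨π.symm e.1.1, hlt⟩, mem_univ _, Subtype.ext ?_⟩
    have hsnd : (⟨π.symm e.1.1 + 1, by omega⟩ : Fin n) = π.symm e.1.2 := Fin.ext h.symm
    simp only [pathEdge, Fin.eta, hsnd, Equiv.apply_symm_apply]

lemma snd_injOn_pathEdges (π : Equiv.Perm (Fin n)) :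
    Set.InjOn (fun e : DEdge n => e.1.2) (pathEdges n π) := by
  intro e he e' he' h
  have hfst : e.1.1 = e'.1.1 := by
    apply π.symm.injective; apply Fin.ext
    have h1 := mem_pathEdges.mp he; have h2 := mem_pathEdges.mp he'
    simp only at h; rw [h] at h1; omega
  exact Subtype.ext (Prod.ext hfst h)

noncomputable def rankIn (H : Finset (Fin n)) (π : Equiv.Perm (Fin n)) (x : Fin n) : ℕ :=
  #{y ∈ H | π.symm y < π.symm x}

section rankIn

variable {H : Finset (Fin n)} {π π' : Equiv.Perm (Fin n)}

lemma rankIn_lt_card {x : Fin n} (hx : x ∈ H) : rankIn H π x < #H :=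
  card_lt_card <| (ssubset_iff_of_subset (filter_subset _ _)).mpr
    ⟨x, hx, fun h => lt_irrefl _ (mem_filter.mp h).2⟩

lemma rankIn_lt_rankIn {x x' : Fin n} (hx : x ∈ H) (h : π.symm x < π.symm x') :
    rankIn H π x < rankIn H π x' := by
  refine card_lt_card ((ssubset_iff_of_subset fun y hy => ?_).mpr
    ⟨x, mem_filter.mpr ⟨hx, h⟩, fun hc => lt_irrefl _ (mem_filter.mp hc).2⟩)
  obtain ⟨hyH, hy⟩ := mem_filter.mp hy
  exact mem_filter.mpr ⟨hyH, hy.trans h⟩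

lemma rankIn_injOn : Set.InjOn (rankIn H π) H := by
  intro x hx x' hx' h
  rcases lt_trichotomy (π.symm x) (π.symm x') with hlt | heq | hgt
  · exact absurd h (rankIn_lt_rankIn hx hlt).ne
  · exact π.symm.injective heq
  · exact absurd h.symm (rankIn_lt_rankIn hx' hgt).ne

lemma rankIn_apply_eq_of_prefix {v : Fin n} (hpre : ∀ u < v, π u = π' u) :
    rankIn H π (π v) = rankIn H π' (π' v) := by
  have key : ∀ {ρ ρ' : Equiv.Perm (Fin n)}, (∀ u < v, ρ u = ρ' u) →
      ∀ y, ρ.symm y < v → ρ'.symm y = ρ.symm y := fun hpre y hy => by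
    rw [Equiv.symm_apply_eq, ← hpre _ hy, Equiv.apply_symm_apply]
  simp only [rankIn, Equiv.symm_apply_apply]
  congr 1
  refine filter_congr fun y _ => ⟨fun hy => ?_, fun hy => ?_⟩
  · rwa [key hpre y hy]
  · rwa [key (fun u hu => (hpre u hu).symm) y hy]

noncomputable def rankEmbedding (H : Finset (Fin n)) (π : Equiv.Perm (Fin n)) : H ↪ Fin #H :=
  ⟨fun x => ⟨rankIn H π x, rankIn_lt_card x.2⟩,
    fun x y h => Subtype.ext (rankIn_injOn x.2 y.2 (congrArg Fin.val h))⟩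

end rankIn

section Count

variable {T : Finset (DEdge n)} {π π' : Equiv.Perm (Fin n)}

lemma apply_eq_snd_of_prefix {e : DEdge n} (he : e ∈ pathEdges n π) (he' : e ∈ pathEdges n π')
    {v : Fin n} (hv : π v = e.1.2) (hpre : ∀ u < v, π u = π' u) : π' v = e.1.2 := by
  have hsucc := mem_pathEdges.mp he
  rw [← hv, Equiv.symm_apply_apply] at hsucc
  have hu : π.symm e.1.1 < v := by rw [Fin.lt_def]; omega
  have hfst : π'.symm e.1.1 = π.symm e.1.1 := by
    rw [Equiv.symm_apply_eq, ← hpre _ hu, Equiv.apply_symm_apply]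
  have hsucc' := mem_pathEdges.mp he'
  rw [hfst, ← hsucc, Fin.val_inj, Equiv.symm_apply_eq] at hsucc'
  exact hsucc'.symm

/-- The starting points of the paths formed by the edges `T`. -/
noncomputable def pathHeads (T : Finset (DEdge n)) : Finset (Fin n) :=
  (T.image fun e => e.1.2)ᶜ

/-- Every vertex outside `pathHeads T` is forced to follow its `T`-predecessor. -/
lemma eq_of_rankIn_pathHeads_eq (hπ : T ⊆ pathEdges n π) (hπ' : T ⊆ pathEdges n π')
    (hrank : ∀ x ∈ pathHeads T, rankIn (pathHeads T) π x = rankIn (pathHeads T) π' x) :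
    π = π' := by
  ext1 v
  induction v using WellFoundedLT.induction with | _ v hpre => ?_
  by_cases hv : ∃ e ∈ T, π v = e.1.2 ∨ π' v = e.1.2
  · obtain ⟨e, he, hv | hv⟩ := hv
    · rw [hv, apply_eq_snd_of_prefix (hπ he) (hπ' he) hv hpre]
    · rw [hv, apply_eq_snd_of_prefix (hπ' he) (hπ he) hv fun u hu => (hpre u hu).symm]
  · push Not at hv
    have hhead : ∀ x, (∀ e ∈ T, x ≠ e.1.2) → x ∈ pathHeads T := by
      intro x hx
      rw [pathHeads, mem_compl]
      intro hxT
      obtain ⟨e, he, rfl⟩ := mem_image.mp hxT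
      exact hx e he rfl
    have hmem := hhead _ fun e he => (hv e he).1
    have hmem' := hhead _ fun e he => (hv e he).2
    refine rankIn_injOn (π := π) hmem hmem' ?_
    rw [rankIn_apply_eq_of_prefix hpre, hrank _ hmem']

lemma card_pathHeads (hT : T ⊆ pathEdges n π) : #(pathHeads T) = n - #T := by
  rw [pathHeads, card_compl, Fintype.card_fin,
    card_image_of_injOn ((snd_injOn_pathEdges π).mono hT)]

theorem card_filter_subset_pathEdges_le (hT : T ⊆ pathEdges n π) :
    #{σ | T ⊆ pathEdges n σ} ≤ (n - #T)! := by
  calc #{σ | T ⊆ pathEdges n σ}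
      ≤ #(univ : Finset (pathHeads T ↪ Fin #(pathHeads T))) := by
        refine card_le_card_of_injOn (rankEmbedding (pathHeads T)) (fun _ _ => mem_univ _) ?_
        intro σ hσ σ' hσ' h
        refine eq_of_rankIn_pathHeads_eq (mem_filter.mp hσ).2 (mem_filter.mp hσ').2 fun x hx => ?_
        exact congrArg Fin.val (DFunLike.congr_fun h ⟨x, hx⟩)
    _ = (n - #T)! := by
        rw [card_univ, Fintype.card_embedding_eq, Fintype.card_fin, Fintype.card_coe,
          Nat.descFactorial_self, card_pathHeads hT]

end Count

lemma choose_pred_mul_factorial_le_div (n j : ℕ) (hj : j ≤ n) :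
    ((n - 1).choose j * (n - j)! : ℝ) ≤ n ! / j ! := by
  rw [le_div_iff₀ (by positivity)]
  have h := Nat.choose_mul_factorial_mul_factorial hj
  have hle := Nat.choose_le_choose j (Nat.sub_le n 1)
  calc ((n - 1).choose j * (n - j)! * j ! : ℝ) ≤ n.choose j * (n - j)! * j ! := by gcongr
    _ = n ! := by rw [← h]; push_cast; ring

/-- Expanding `(1 + x) ^ #(E π ∩ E σ)` over subsets `T` and summing over `σ` first, each
`T ⊆ E π` contributes at most `(n - #T)! * x ^ #T`. -/
theorem sum_pow_card_inter_pathEdges_le (π : Equiv.Perm (Fin n)) {x : ℝ} (hx : 0 ≤ x) :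
    ∑ σ, (1 + x) ^ #(pathEdges n π ∩ pathEdges n σ) ≤ n ! * Real.exp x := by
  have hexpand : ∀ σ, (1 + x) ^ #(pathEdges n π ∩ pathEdges n σ)
      = ∑ T ∈ (pathEdges n π).powerset, if T ⊆ pathEdges n σ then x ^ #T else 0 := by
    intro σ
    rw [← sum_filter, add_comm, ← sum_pow_mul_eq_add_pow]
    refine sum_congr ?_ fun _ _ => by rw [one_pow, mul_one]
    ext T
    simp only [mem_filter, mem_powerset, subset_inter_iff]
  calc ∑ σ, (1 + x) ^ #(pathEdges n π ∩ pathEdges n σ)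
      = ∑ T ∈ (pathEdges n π).powerset, (#{σ | T ⊆ pathEdges n σ} : ℝ) * x ^ #T := by
        simp only [hexpand]
        rw [sum_comm]
        exact sum_congr rfl fun T _ => by rw [← sum_filter, sum_const, nsmul_eq_mul]
    _ ≤ ∑ T ∈ (pathEdges n π).powerset, ((n - #T)! : ℝ) * x ^ #T := by
        refine sum_le_sum fun T hT => ?_
        gcongr
        exact_mod_cast card_filter_subset_pathEdges_le (mem_powerset.mp hT)
    _ = ∑ j ∈ range (n - 1 + 1), ((n - 1).choose j * (n - j)! : ℝ) * x ^ j := by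
        rw [Finset.sum_powerset_apply_card (fun j => ((n - j)! : ℝ) * x ^ j), card_pathEdges]
        simp only [nsmul_eq_mul, mul_assoc]
    _ ≤ ∑ j ∈ range (n - 1 + 1), n ! * (x ^ j / j !) := by
        refine sum_le_sum fun j hj => ?_
        have hj : j ≤ n := by have := mem_range.mp hj; omega
        calc ((n - 1).choose j * (n - j)! : ℝ) * x ^ j ≤ n ! / j ! * x ^ j := by
              gcongr; exact choose_pred_mul_factorial_le_div n j hj
          _ = n ! * (x ^ j / j !) := by ring
    _ ≤ n ! * Real.exp x := by
        rw [← mul_sum]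
        exact mul_le_mul_of_nonneg_left (Real.sum_le_exp_of_nonneg hx _) (by positivity)

/-- Since `#(A ∪ B) + #(A ∩ B) = 2(n - 1)`, the sum is `p ^ (2(n-1))` times a sum of powers of
`1 / p = 1 + (1 / p - 1)`. -/
theorem sum_pow_card_union_pathEdges_le {p : ℝ} (hp0 : 0 < p) (hp1 : p ≤ 1) :
    ∑ π, ∑ σ, p ^ #(pathEdges n π ∪ pathEdges n σ)
      ≤ (n ! * p ^ (n - 1)) ^ 2 * Real.exp (1 / p - 1) := by
  have hterm : ∀ π σ : Equiv.Perm (Fin n), p ^ #(pathEdges n π ∪ pathEdges n σ)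
      = p ^ (n - 1) * p ^ (n - 1) * (1 + (1 / p - 1)) ^ #(pathEdges n π ∩ pathEdges n σ) := by
    intro π σ
    have hcard := card_union_add_card_inter (pathEdges n π) (pathEdges n σ)
    rw [card_pathEdges, card_pathEdges] at hcard
    rw [add_sub_cancel, ← pow_add, ← hcard, pow_add, one_div_pow, mul_assoc,
      mul_one_div_cancel (pow_ne_zero _ hp0.ne'), mul_one]
  have hx : 0 ≤ 1 / p - 1 := by rw [sub_nonneg, le_div_iff₀ hp0]; linarith
  calc ∑ π, ∑ σ, p ^ #(pathEdges n π ∪ pathEdges n σ)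
      = ∑ π : Equiv.Perm (Fin n), p ^ (n - 1) * p ^ (n - 1) *
          ∑ σ, (1 + (1 / p - 1)) ^ #(pathEdges n π ∩ pathEdges n σ) := by
        simp only [hterm, mul_sum]
    _ ≤ ∑ _π : Equiv.Perm (Fin n), p ^ (n - 1) * p ^ (n - 1) * (n ! * Real.exp (1 / p - 1)) := by
        gcongr with π
        exact sum_pow_card_inter_pathEdges_le π hx
    _ = (n ! * p ^ (n - 1)) ^ 2 * Real.exp (1 / p - 1) := by
        rw [sum_const, card_univ, Fintype.card_perm, Fintype.card_fin, nsmul_eq_mul]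
        ring

instance (q : ℝ≥0∞) (hq : q ≤ 1) : IsProbabilityMeasure (digraphMeasure n q hq) := by
  unfold digraphMeasure; infer_instance

lemma digraphMeasure_forall_eq_true (q : ℝ≥0∞) (hq : q ≤ 1) (T : Finset (DEdge n)) :
    digraphMeasure n q hq {ω | ∀ e ∈ T, ω e = true} = q ^ #T := by
  refine (measure_pi_bernoulli_forall_eq_true _ _ T).trans ?_
  rw [ENNReal.coe_toNNReal (ne_top_of_le_ne_top ENNReal.one_ne_top hq)]

def pathEvent (n : ℕ) (π : Equiv.Perm (Fin n)) : Set (DEdge n → Bool) :=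
  {ω | ∀ e ∈ pathEdges n π, ω e = true}

lemma hamY_eq_sum_indicator (ω : DEdge n → Bool) :
    (hamY n ω : ℝ≥0∞) = ∑ π, (pathEvent n π).indicator 1 ω := by
  classical
  simp only [hamY, pathEvent, pathEdges, forall_mem_image, mem_univ, true_implies,
    card_filter, Nat.cast_sum, Set.indicator_apply, Set.mem_ofPred_eq]
  exact sum_congr rfl fun π _ => by split_ifs <;> simp

lemma lintegral_hamY (q : ℝ≥0∞) (hq : q ≤ 1) :
    ∫⁻ ω, (hamY n ω : ℝ≥0∞) ∂digraphMeasure n q hq = n ! * q ^ (n - 1) := by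
  simp_rw [hamY_eq_sum_indicator]
  rw [lintegral_sum_indicator_one _ fun _ => (Set.toFinite _).measurableSet]
  simp only [pathEvent, digraphMeasure_forall_eq_true, card_pathEdges, sum_const, card_univ,
    Fintype.card_perm, Fintype.card_fin, nsmul_eq_mul]

lemma lintegral_hamY_sq (q : ℝ≥0∞) (hq : q ≤ 1) :
    ∫⁻ ω, (hamY n ω : ℝ≥0∞) ^ 2 ∂digraphMeasure n q hq
      = ∑ π, ∑ σ, q ^ #(pathEdges n π ∪ pathEdges n σ) := by
  simp_rw [hamY_eq_sum_indicator]
  rw [lintegral_sum_indicator_one_sq _ fun _ => (Set.toFinite _).measurableSet]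
  have hinter : ∀ π σ, pathEvent n π ∩ pathEvent n σ
      = {ω | ∀ e ∈ pathEdges n π ∪ pathEdges n σ, ω e = true} := fun π σ => by
    ext ω; simp only [pathEvent, Set.mem_inter_iff, Set.mem_ofPred_eq, forall_mem_union]
  simp only [hinter, digraphMeasure_forall_eq_true]

lemma lintegral_hamY_sq_le {p : ℝ} (hp0 : 0 < p) (hp1 : p ≤ 1) :
    ∫⁻ ω, (hamY n ω : ℝ≥0∞) ^ 2 ∂digraphMeasure n (ENNReal.ofReal p) (ENNReal.ofReal_le_one.mpr hp1)
      ≤ ENNReal.ofReal ((n ! * p ^ (n - 1)) ^ 2 * Real.exp (1 / p - 1)) := by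
  refine le_of_eq_of_le ?_ (ENNReal.ofReal_le_ofReal (sum_pow_card_union_pathEdges_le hp0 hp1))
  rw [lintegral_hamY_sq,
    ENNReal.ofReal_sum_of_nonneg fun π _ => sum_nonneg fun σ _ => by positivity]
  refine sum_congr rfl fun π _ => ?_
  rw [ENNReal.ofReal_sum_of_nonneg fun σ _ => by positivity]
  simp only [ENNReal.ofReal_pow hp0.le]

end HamiltonianPath

open HamiltonianPath in
theorem stmt16_general (n : ℕ) (p : ℝ) (hp0 : 0 < p) (hp1 : p < 1) :
    ENNReal.ofReal ((1 / 4) * Real.exp (1 - 1 / p)) ≤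
      digraphMeasure n (ENNReal.ofReal p) (ENNReal.ofReal_le_one.mpr hp1.le)
        {ω | (1 / 2 : ℝ) * (n.factorial : ℝ) * p ^ (n - 1) ≤ (hamY n ω : ℝ)} := by
  set μ := digraphMeasure n (ENNReal.ofReal p) (ENNReal.ofReal_le_one.mpr hp1.le)
  set c : ℝ := n ! * p ^ (n - 1)
  have hc : 0 < c := by positivity
  have hhalf : (2⁻¹ : ℝ≥0∞) = ENNReal.ofReal 2⁻¹ := by
    rw [ENNReal.ofReal_inv_of_pos two_pos, ENNReal.ofReal_ofNat]
  have hE : ∫⁻ ω, (hamY n ω : ℝ≥0∞) ∂μ = ENNReal.ofReal c := by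
    rw [lintegral_hamY, ENNReal.ofReal_mul (by positivity), ENNReal.ofReal_natCast,
      ENNReal.ofReal_pow hp0.le]
  have hA : {ω | 2⁻¹ * ∫⁻ ω, (hamY n ω : ℝ≥0∞) ∂μ ≤ hamY n ω}
      = {ω | (1 / 2 : ℝ) * (n.factorial : ℝ) * p ^ (n - 1) ≤ (hamY n ω : ℝ)} := by
    ext ω
    rw [Set.mem_ofPred_eq, Set.mem_ofPred_eq, hE, hhalf, ← ENNReal.ofReal_mul (by norm_num),
      ← ENNReal.ofReal_natCast, ENNReal.ofReal_le_ofReal_iff (Nat.cast_nonneg _), mul_assoc,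
      one_div]
  calc ENNReal.ofReal ((1 / 4) * Real.exp (1 - 1 / p))
      = (1 - 2⁻¹) ^ 2 * ENNReal.ofReal c ^ 2 / ENNReal.ofReal (c ^ 2 * Real.exp (1 / p - 1)) := by
        rw [ENNReal.one_sub_inv_two, hhalf, ← ENNReal.ofReal_pow (by norm_num),
          ← ENNReal.ofReal_pow hc.le, ← ENNReal.ofReal_mul (by positivity),
          ← ENNReal.ofReal_div_of_pos (by positivity), show 1 - 1 / p = -(1 / p - 1) by ring,
          Real.exp_neg]
        congr 1
        field_simp
        ring
    _ ≤ (1 - 2⁻¹) ^ 2 * (∫⁻ ω, (hamY n ω : ℝ≥0∞) ∂μ) ^ 2 / ∫⁻ ω, (hamY n ω : ℝ≥0∞) ^ 2 ∂μ := by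
        rw [hE]
        exact ENNReal.div_le_div_left (lintegral_hamY_sq_le hp0 hp1.le) _
    _ ≤ μ {ω | 2⁻¹ * ∫⁻ ω, (hamY n ω : ℝ≥0∞) ∂μ ≤ hamY n ω} :=
        paley_zygmund (measurable_of_finite _) (hE ▸ ENNReal.ofReal_ne_top) 2⁻¹
    _ = _ := by rw [hA]

/-- second-moment lower bound. Fix `n ≥ 2` and `p ∈ (0,1)`. If `Y` is the
number of Hamiltonian paths of `G⃗(n,p)`, then
`ℙ(Y ≥ ½ n! p^{n−1}) ≥ ¼ exp(1 − 1/p)`. -/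
theorem stmt16 (n : ℕ) (hn : 2 ≤ n) (p : ℝ) (hp0 : 0 < p) (hp1 : p < 1) :
    ENNReal.ofReal ((1 / 4) * Real.exp (1 - 1 / p)) ≤
      digraphMeasure n (ENNReal.ofReal p) (ENNReal.ofReal_le_one.mpr hp1.le)
        {ω | (1 / 2 : ℝ) * (n.factorial : ℝ) * p ^ (n - 1) ≤ (hamY n ω : ℝ)} :=
  stmt16_general n p hp0 hp1
end
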